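/- arXiv:math/0405237 — 8 statements merged into one kernel-verified Lean document; each statement's English description precedes it below -/
import Mathlib

section
/- Let Γ be a group with a finite symmetric generating set S, equipped with the word metric, and let G₁, …, Gₙ be arbitrary subgroups of Γ (not necessarily finitely generated). Then for every r ≥ 0 there exists N ≥ 0 such that every element x ∈ Γ with x ∈ N_r(Gᵢ) for all i = 1, …, n satisfies x ∈ N_N(G₁ ∩ ⋯ ∩ Gₙ); that is, N_r(G₁) ∩ ⋯ ∩ N_r(Gₙ) ⊆ N_N(G₁ ∩ ⋯ ∩ Gₙ). Since conversely G₁ ∩ ⋯ ∩ Gₙ ⊆ N_r(G₁) ∩ ⋯ ∩ N_r(Gₙ) for every r ≥ 0, the coarse intersection of the subgroups G₁, …, Gₙ is well defined and is represented by G₁ ∩ ⋯ ∩ Gₙ. -/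
/-- The word norm of `γ` with respect to a generating set `S`: the least length of a
list of elements of `S` whose product is `γ`. -/
noncomputable def wordNorm {Γ : Type*} [Group Γ] (S : Set Γ) (γ : Γ) : ℕ :=
  sInf {n : ℕ | ∃ l : List Γ, (∀ x ∈ l, x ∈ S) ∧ l.length = n ∧ l.prod = γ}

/-- The word metric on `Γ` associated to the generating set `S`. -/
noncomputable def wordDist {Γ : Type*} [Group Γ] (S : Set Γ) (g h : Γ) : ℕ :=
  wordNorm S (g⁻¹ * h)

section Aux
variable {Γ : Type*} [Group Γ] {S : Set Γ}

lemma exists_list_of_sym_gen (hsym : ∀ s ∈ S, s⁻¹ ∈ S) (hgen : Subgroup.closure S = ⊤)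
    (γ : Γ) : ∃ l : List Γ, (∀ x ∈ l, x ∈ S) ∧ l.prod = γ := by
  have hγ : γ ∈ (Subgroup.closure S).toSubmonoid := by rw [hgen]; trivial
  rw [Subgroup.closure_toSubmonoid] at hγ
  obtain ⟨l, hl, hp⟩ := Submonoid.exists_list_of_mem_closure hγ
  refine ⟨l, fun x hx => ?_, hp⟩
  rcases hl x hx with h | h
  · exact h
  · simpa using hsym _ h

lemma wordNorm_spec (hsym : ∀ s ∈ S, s⁻¹ ∈ S) (hgen : Subgroup.closure S = ⊤) (γ : Γ) :
    ∃ l : List Γ, (∀ x ∈ l, x ∈ S) ∧ l.length = wordNorm S γ ∧ l.prod = γ := by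
  have hne : {n : ℕ | ∃ l : List Γ, (∀ x ∈ l, x ∈ S) ∧ l.length = n ∧ l.prod = γ}.Nonempty := by
    obtain ⟨l, hl, hp⟩ := exists_list_of_sym_gen hsym hgen γ
    exact ⟨l.length, l, hl, rfl, hp⟩
  exact Nat.sInf_mem hne

lemma wordNorm_one : wordNorm S (1 : Γ) = 0 :=
  Nat.sInf_eq_zero.2 (Or.inl ⟨[], by simp⟩)

lemma ball_finite (hfin : S.Finite) (hsym : ∀ s ∈ S, s⁻¹ ∈ S)
    (hgen : Subgroup.closure S = ⊤) (m : ℕ) :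
    {γ : Γ | wordNorm S γ ≤ m}.Finite := by
  have : Finite ↥hfin.toFinset := inferInstance
  have hLfin : {l : List ↥hfin.toFinset | l.length ≤ m}.Finite := List.finite_length_le _ m
  have hsub : {γ : Γ | wordNorm S γ ≤ m} ⊆
      (fun l : List ↥hfin.toFinset => (l.map Subtype.val).prod) '' {l | l.length ≤ m} := by
    intro γ hγ
    obtain ⟨l, hl, hlen, hp⟩ := wordNorm_spec hsym hgen γ
    refine ⟨l.pmap (fun x hx => (⟨x, hx⟩ : ↥hfin.toFinset)) (fun x hx => by
      simpa using hl x hx), ?_, ?_⟩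
    · simpa [Set.mem_setOf_eq, List.length_pmap, hlen] using hγ
    · simp [List.map_pmap, hp]
  exact (hLfin.image _).subset hsub

end Aux

/-- **Coarse intersection of subgroups is well defined.**
Let `Γ` be a group with a finite symmetric generating set `S`, equipped with the word
metric, and let `G₁, …, Gₙ` be arbitrary subgroups.  For every `r ≥ 0` there is `N ≥ 0`
such that `N_r(G₁) ∩ ⋯ ∩ N_r(Gₙ) ⊆ N_N(G₁ ∩ ⋯ ∩ Gₙ)`; conversely the intersection
`G₁ ∩ ⋯ ∩ Gₙ` is contained in each `N_r(Gᵢ)`.  Hence the coarse intersection of the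
subgroups is represented by their actual intersection. -/
theorem coarse_intersection_of_subgroups
    {Γ : Type*} [Group Γ] (S : Set Γ) (hfin : S.Finite)
    (hsym : ∀ s ∈ S, s⁻¹ ∈ S) (hgen : Subgroup.closure S = ⊤)
    {n : ℕ} (G : Fin n → Subgroup Γ) (r : ℝ) (hr : 0 ≤ r) :
    ∃ N : ℝ, 0 ≤ N ∧
      (∀ x : Γ, (∀ i, ∃ g ∈ G i, (wordDist S x g : ℝ) ≤ r) →
        ∃ g : Γ, (∀ i, g ∈ G i) ∧ (wordDist S x g : ℝ) ≤ N) ∧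
      (∀ x : Γ, (∀ i, x ∈ G i) → ∀ i, ∃ g ∈ G i, (wordDist S x g : ℝ) ≤ r) := by
  classical
  set m : ℕ := ⌊r⌋₊ with hm
  have hball := ball_finite hfin hsym hgen m
  set T : Set (Fin n → Γ) := {t | ∀ i, wordNorm S (t i) ≤ m} with hTdef
  have hT : T.Finite := by
    have hpi : (Set.pi Set.univ fun _ : Fin n => {γ : Γ | wordNorm S γ ≤ m}).Finite :=
      Set.Finite.pi fun _ => hball
    exact hpi.subset fun t ht => Set.mem_pi.2 fun i _ => ht i
  set P : (Fin n → Γ) → Prop := fun t => ∃ x₀ : Γ, ∀ i, x₀ * t i ∈ G i with hPdef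
  set φ : (Fin n → Γ) → ℕ := fun t =>
    if h : P t then wordNorm S (Classical.choose h)⁻¹ else 0 with hφdef
  obtain ⟨M, hM⟩ := (hT.image φ).bddAbove
  refine ⟨(M : ℝ), Nat.cast_nonneg M, ?_, ?_⟩
  · intro x hx
    choose g hg hd using hx
    set t : Fin n → Γ := fun i => x⁻¹ * g i with htdef
    have htT : t ∈ T := fun i => Nat.le_floor (by simpa [wordDist] using hd i)
    have hPt : P t := ⟨x, fun i => by simpa [htdef] using hg i⟩
    set x₀ := Classical.choose hPt with hx₀def
    have hx₀ := Classical.choose_spec hPt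
    refine ⟨x * x₀⁻¹, fun i => ?_, ?_⟩
    · have h1 : x * t i ∈ G i := by simpa [htdef] using hg i
      have h2 : (x₀ * t i)⁻¹ ∈ G i := inv_mem (hx₀ i)
      have heq : (x * t i) * (x₀ * t i)⁻¹ = x * x₀⁻¹ := by group
      have := mul_mem h1 h2
      rwa [heq] at this
    · have hdist : wordDist S x (x * x₀⁻¹) = wordNorm S x₀⁻¹ := by
        simp [wordDist]
      have hφt : φ t = wordNorm S x₀⁻¹ := by
        rw [hφdef]; simp only []; rw [dif_pos hPt]
      have : φ t ≤ M := hM ⟨t, htT, rfl⟩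
      rw [hdist, ← hφt]
      exact_mod_cast this
  · intro x hx i
    refine ⟨x, hx i, ?_⟩
    simp only [wordDist, inv_mul_cancel, wordNorm_one, Nat.cast_zero]
    exact hr
end

section
/- (Coboundedness principle, part 2.) Let X be a metric space, let G be a group with a (K,C)-quasi-action (A_g)_{g∈G} on X which is cobounded, let (A_i)_{i∈ι} be a locally finite family of nonempty subsets of X, and suppose G acts on the index set ι compatibly with the quasi-action with some constant C' ≥ 0. Then for every i ∈ ι and every x₀ ∈ A_i there exists r' ≥ 0 such that for every x ∈ A_i there is g ∈ Stab(i) with d(A_g(x₀), x) ≤ r'; that is, the orbit of x₀ under the quasi-action restricted to the stabilizer Stab(i) is r'-dense in A_i. -/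
/-- A `(K,C)`-quasi-isometric embedding between metric spaces. -/
def IsQIEmbedding {X Y : Type*} [MetricSpace X] [MetricSpace Y] (K C : ℝ) (f : X → Y) : Prop :=
  ∀ x x' : X, (1/K) * dist x x' - C ≤ dist (f x) (f x') ∧
    dist (f x) (f x') ≤ K * dist x x' + C

/-- A `(K,C)`-quasi-isometry between metric spaces. -/
def IsQI {X Y : Type*} [MetricSpace X] [MetricSpace Y] (K C : ℝ) (f : X → Y) : Prop :=
  IsQIEmbedding K C f ∧ ∀ y : Y, ∃ x : X, dist (f x) y ≤ C

/-- A `(K,C)`-quasi-action of a group `G` on a metric space `X`. -/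
def IsQuasiAction {G X : Type*} [Group G] [MetricSpace X] (K C : ℝ) (A : G → X → X) : Prop :=
  (∀ g : G, IsQI K C (A g)) ∧ ∀ (g h : G) (x : X), dist (A g (A h x)) (A (g * h) x) ≤ C

/-- A quasi-action is cobounded if some orbit is coarsely dense, uniformly. -/
def CoboundedQA {G X : Type*} [Group G] [MetricSpace X] (A : G → X → X) : Prop :=
  ∃ r : ℝ, 0 ≤ r ∧ ∀ x y : X, ∃ g : G, dist (A g x) y ≤ r

/-- A family of nonempty subsets of `X` is locally finite if every bounded set meets
only finitely many members of the family. -/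
def LocallyFiniteFamily {X ι : Type*} [MetricSpace X] (𝒜 : ι → Set X) : Prop :=
  (∀ i, (𝒜 i).Nonempty) ∧
    ∀ B : Set X, Bornology.IsBounded B → {i : ι | (𝒜 i ∩ B).Nonempty}.Finite

/-- An action of `G` on the index set `ι` is compatible with the quasi-action `A` on `X`,
with constant `C'`, if `A_g(𝒜 i)` and `𝒜 (g • i)` are at Hausdorff distance at most `C'`. -/
def CompatibleIndexAction {G X ι : Type*} [Group G] [MetricSpace X] [MulAction G ι]
    (A : G → X → X) (𝒜 : ι → Set X) (C' : ℝ) : Prop :=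
  ∀ (g : G) (i : ι),
    EMetric.hausdorffEdist ((A g) '' (𝒜 i)) (𝒜 (g • i)) ≤ ENNReal.ofReal C'

/-- **Coboundedness principle, part 2.**  Given a cobounded `(K,C)`-quasi-action of `G`
on `X`, a locally finite family of nonempty subsets of `X` indexed by `ι`, and a compatible
action of `G` on `ι`, for every `i ∈ ι` and `x₀ ∈ 𝒜 i` there is `r' ≥ 0` such that the
orbit of `x₀` under (the quasi-action restricted to) the stabilizer of `i` is `r'`-dense
in `𝒜 i`. -/
theorem coboundedness_principle_stabilizer_cobounded
    {G X ι : Type*} [Group G] [MetricSpace X] [MulAction G ι]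
    (K C C' : ℝ) (hK : 1 ≤ K) (hC : 0 ≤ C) (hC' : 0 ≤ C')
    (A : G → X → X) (hQA : IsQuasiAction K C A) (hcb : CoboundedQA A)
    (𝒜 : ι → Set X) (hlf : LocallyFiniteFamily 𝒜)
    (hcomp : CompatibleIndexAction A 𝒜 C') :
    ∀ i : ι, ∀ x₀ ∈ 𝒜 i, ∃ r' : ℝ, 0 ≤ r' ∧
      ∀ x ∈ 𝒜 i, ∃ g ∈ MulAction.stabilizer G i, dist (A g x₀) x ≤ r' := by
  obtain ⟨hQI, hmul⟩ := hQA
  obtain ⟨r, hr0, hr⟩ := hcb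
  intro i x₀ hx₀
  have hK0 : (0:ℝ) < K := lt_of_lt_of_le one_pos hK
  have h1 : ∀ x : X, dist (A 1 x) x ≤ 2*K*C := by
    intro x
    have h2 := hmul 1 1 x
    rw [one_mul] at h2
    have h3 := ((hQI 1).1 (A 1 x) x).1
    have h5 : (1/K) * dist (A 1 x) x ≤ 2*C := by linarith
    have h6 : dist (A 1 x) x = K * ((1/K) * dist (A 1 x) x) := by
      field_simp
    rw [h6]
    calc K * ((1/K) * dist (A 1 x) x) ≤ K * (2*C) :=
          mul_le_mul_of_nonneg_left h5 hK0.le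
      _ = 2*K*C := by ring
  have hinv : ∀ (g : G) (x : X), dist (A g⁻¹ (A g x)) x ≤ C + 2*K*C := by
    intro g x
    have h2 := hmul g⁻¹ g x
    rw [inv_mul_cancel] at h2
    calc dist (A g⁻¹ (A g x)) x
        ≤ dist (A g⁻¹ (A g x)) (A 1 x) + dist (A 1 x) x := dist_triangle _ _ _
      _ ≤ C + 2*K*C := add_le_add h2 (h1 x)
  have hKr : 0 ≤ K * r := mul_nonneg hK0.le hr0
  have hKC : 0 ≤ K * C := mul_nonneg hK0.le hC
  set ρ : ℝ := K*r + 2*C + 2*K*C + (C' + 1) with hρdef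
  set B := Metric.closedBall x₀ ρ with hBdef
  have hBfin := hlf.2 B Metric.isBounded_closedBall
  have hsel : ∀ j : ι, ∃ h : G, j ∈ MulAction.orbit G i → h • i = j := by
    intro j
    by_cases hj : j ∈ MulAction.orbit G i
    · obtain ⟨h, hh⟩ := hj
      exact ⟨h, fun _ => hh⟩
    · exact ⟨1, fun h => absurd h hj⟩
  choose sel hsel' using hsel
  set F : Set ι := {j | (𝒜 j ∩ B).Nonempty ∧ j ∈ MulAction.orbit G i} with hFdef
  have hF : F.Finite := hBfin.subset (fun j hj => hj.1)
  obtain ⟨M, hM⟩ := (hF.image (fun j => dist (A (sel j) x₀) x₀)).bddAbove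
  have hM0 : 0 ≤ K * max M 0 := mul_nonneg hK0.le (le_max_right M 0)
  refine ⟨C + (K * max M 0 + C) + r, by linarith, ?_⟩
  intro x hx
  obtain ⟨g, hg⟩ := hr x₀ x
  have hd : dist (A g⁻¹ x) x₀ ≤ K*r + 2*C + 2*K*C := by
    have t1 : dist (A g⁻¹ x) (A g⁻¹ (A g x₀)) ≤ K * dist x (A g x₀) + C :=
      ((hQI g⁻¹).1 x (A g x₀)).2
    have t2 : dist x (A g x₀) ≤ r := by rw [dist_comm]; exact hg
    have t3 : K * dist x (A g x₀) ≤ K * r := mul_le_mul_of_nonneg_left t2 hK0.le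
    calc dist (A g⁻¹ x) x₀
        ≤ dist (A g⁻¹ x) (A g⁻¹ (A g x₀)) + dist (A g⁻¹ (A g x₀)) x₀ := dist_triangle _ _ _
      _ ≤ (K * dist x (A g x₀) + C) + (C + 2*K*C) := add_le_add t1 (hinv g x₀)
      _ ≤ K*r + 2*C + 2*K*C := by linarith
  have hmem : A g⁻¹ x ∈ (A g⁻¹) '' (𝒜 i) := ⟨x, hx, rfl⟩
  have hlt : EMetric.hausdorffEdist ((A g⁻¹) '' (𝒜 i)) (𝒜 (g⁻¹ • i))
      < ENNReal.ofReal (C' + 1) := by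
    refine lt_of_le_of_lt (hcomp g⁻¹ i) ?_
    exact (ENNReal.ofReal_lt_ofReal_iff (by linarith)).mpr (by linarith)
  obtain ⟨y, hy, hylt⟩ := EMetric.exists_edist_lt_of_hausdorffEdist_lt hmem hlt
  have hyd : dist (A g⁻¹ x) y ≤ C' + 1 := by
    rw [edist_dist] at hylt
    exact le_of_lt ((ENNReal.ofReal_lt_ofReal_iff (by linarith)).mp hylt)
  have hyB : y ∈ B := by
    rw [hBdef, Metric.mem_closedBall]
    calc dist y x₀ ≤ dist y (A g⁻¹ x) + dist (A g⁻¹ x) x₀ := dist_triangle _ _ _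
      _ ≤ (C' + 1) + (K*r + 2*C + 2*K*C) := by
          rw [dist_comm]; exact add_le_add hyd hd
      _ = ρ := by rw [hρdef]; ring
  have horb : (g⁻¹ • i) ∈ MulAction.orbit G i := ⟨g⁻¹, rfl⟩
  have hjF : (g⁻¹ • i) ∈ F := ⟨⟨y, hy, hyB⟩, horb⟩
  have hh : sel (g⁻¹ • i) • i = g⁻¹ • i := hsel' _ horb
  refine ⟨g * sel (g⁻¹ • i), ?_, ?_⟩
  · rw [MulAction.mem_stabilizer_iff, mul_smul, hh, smul_inv_smul]
  · have hDM : dist (A (sel (g⁻¹ • i)) x₀) x₀ ≤ max M 0 :=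
      le_trans (hM ⟨_, hjF, rfl⟩) (le_max_left M 0)
    have t1 : dist (A (g * sel (g⁻¹ • i)) x₀) (A g (A (sel (g⁻¹ • i)) x₀)) ≤ C := by
      rw [dist_comm]; exact hmul g _ x₀
    have t2 : dist (A g (A (sel (g⁻¹ • i)) x₀)) (A g x₀)
        ≤ K * dist (A (sel (g⁻¹ • i)) x₀) x₀ + C :=
      ((hQI g).1 _ _).2
    have t3 : K * dist (A (sel (g⁻¹ • i)) x₀) x₀ ≤ K * max M 0 :=
      mul_le_mul_of_nonneg_left hDM hK0.le
    calc dist (A (g * sel (g⁻¹ • i)) x₀) x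
        ≤ dist (A (g * sel (g⁻¹ • i)) x₀) (A g (A (sel (g⁻¹ • i)) x₀))
          + dist (A g (A (sel (g⁻¹ • i)) x₀)) (A g x₀) + dist (A g x₀) x :=
          dist_triangle4 _ _ _ _
      _ ≤ C + (K * max M 0 + C) + r := by
          have := add_le_add (add_le_add t1 t2) hg
          linarith
end

section
/- Let X and X' be metric spaces, and let G be a group equipped with a proper, cobounded (K,C)-quasi-action (A_g) on X and a proper, cobounded (K,C)-quasi-action (A'_g) on X'. Let (A_i)_{i∈ι} and (A'_j)_{j∈ι'} be locally finite families of nonempty subsets of X and X' respectively, each equipped with a compatible action of G on its index set (with constant C' ≥ 0). Let f : X → X' be a (K,C)-quasi-isometry which is coarsely G-equivariant, i.e., there exists r ≥ 0 with d(f(A_g(x)), A'_g(f(x))) ≤ r for all g ∈ G and x ∈ X, and suppose there is a G-equivariant bijection f_# : ι → ι' (so in particular Stab(i) = Stab(f_#(i)) for every i ∈ ι). Then there exists C'' ≥ 0 such that for every i ∈ ι the Hausdorff distance between f(A_i) = {f(x) : x ∈ A_i} and A'_{f_#(i)} is at most C''; that is, f coarsely respects the two families with a uniform constant. -/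
/-- A quasi-action is proper if, for each radius `R`, the number of group elements
carrying a given `R`-ball to within reach of another given `R`-ball is uniformly finite. -/
def ProperQA {G X : Type*} [Group G] [MetricSpace X] (A : G → X → X) : Prop :=
  ∀ R : ℝ, 0 ≤ R → ∃ M : ℕ, ∀ x y : X,
    {g : G | (((A g) '' Metric.closedBall x R) ∩ Metric.closedBall y R).Nonempty}.Finite ∧
    {g : G | (((A g) '' Metric.closedBall x R) ∩ Metric.closedBall y R).Nonempty}.ncard ≤ M

private lemma qipat_exists_close {Y : Type*} [MetricSpace Y] {U V : Set Y} {c : ℝ}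
    (hc : 0 ≤ c) (h : EMetric.hausdorffEdist U V ≤ ENNReal.ofReal c) {u : Y} (hu : u ∈ U) :
    ∃ v ∈ V, dist u v ≤ c + 1 := by
  have h1 : EMetric.infEdist u V < ENNReal.ofReal (c + 1) := by
    refine lt_of_le_of_lt (le_trans (EMetric.infEdist_le_hausdorffEdist_of_mem hu) h) ?_
    exact (ENNReal.ofReal_lt_ofReal_iff (by linarith)).2 (by linarith)
  obtain ⟨v, hv, hlt⟩ := EMetric.infEdist_lt_iff.1 h1
  exact ⟨v, hv, le_of_lt (edist_lt_ofReal.1 hlt)⟩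

private lemma qipat_infEdist_le {Y : Type*} [MetricSpace Y] {V : Set Y} {u v : Y} {c : ℝ}
    (hv : v ∈ V) (hd : dist u v ≤ c) : EMetric.infEdist u V ≤ ENNReal.ofReal c := by
  refine le_trans (EMetric.infEdist_le_edist_of_mem hv) ?_
  rw [edist_dist]
  exact ENNReal.ofReal_le_ofReal hd

/-- Let `G` have proper cobounded `(K,C)`-quasi-actions on `X` and `X'`, with locally finite
families `𝒜`, `𝒜'` of nonempty subsets indexed by `ι`, `ι'`, each carrying a compatible
`G`-action.  Let `f : X → X'` be a coarsely `G`-equivariant `(K,C)`-quasi-isometry, and let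
`f_# : ι ≃ ι'` be a `G`-equivariant bijection.  Then there is `C'' ≥ 0` so that for every
`i`, the Hausdorff distance between `f(𝒜 i)` and `𝒜' (f_# i)` is at most `C''`:
`f` coarsely respects the two families, with a uniform constant. -/
theorem quasiIsometry_coarsely_respects_patterns
    {G X X' ι ι' : Type*} [Group G] [MetricSpace X] [MetricSpace X']
    [MulAction G ι] [MulAction G ι']
    (K C C' : ℝ) (hK : 1 ≤ K) (hC : 0 ≤ C) (hC' : 0 ≤ C')
    (A : G → X → X) (A' : G → X' → X')
    (hQA : IsQuasiAction K C A) (hQA' : IsQuasiAction K C A')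
    (hprop : ProperQA A) (hprop' : ProperQA A')
    (hcb : CoboundedQA A) (hcb' : CoboundedQA A')
    (𝒜 : ι → Set X) (𝒜' : ι' → Set X')
    (hlf : LocallyFiniteFamily 𝒜) (hlf' : LocallyFiniteFamily 𝒜')
    (hcomp : CompatibleIndexAction A 𝒜 C') (hcomp' : CompatibleIndexAction A' 𝒜' C')
    (f : X → X') (hf : IsQI K C f)
    (r : ℝ) (hr : 0 ≤ r)
    (hequiv : ∀ (g : G) (x : X), dist (f (A g x)) (A' g (f x)) ≤ r)
    (fsharp : ι ≃ ι') (hsharp : ∀ (g : G) (i : ι), fsharp (g • i) = g • fsharp i) :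
    ∃ C'' : ℝ, 0 ≤ C'' ∧ ∀ i : ι,
      EMetric.hausdorffEdist (f '' (𝒜 i)) (𝒜' (fsharp i)) ≤ ENNReal.ofReal C'' :=  by
  classical
  rcases isEmpty_or_nonempty ι with hι | hι
  · exact ⟨0, le_refl 0, fun i => (IsEmpty.false i).elim⟩
  have hKpos : (0:ℝ) < K := lt_of_lt_of_le one_pos hK
  have hKnn : (0:ℝ) ≤ K := hKpos.le
  obtain ⟨i0⟩ := hι
  obtain ⟨x0, hx0⟩ := hlf.1 i0
  set x0' : X' := f x0 with hx0'
  obtain ⟨r0, hr0, hcbA⟩ := hcb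
  obtain ⟨r0', hr0', hcbA'⟩ := hcb'
  -- basic quasi-action estimates
  have hA_up : ∀ (g : G) (x y : X), dist (A g x) (A g y) ≤ K * dist x y + C :=
    fun g x y => ((hQA.1 g).1 x y).2
  have hA'_up : ∀ (g : G) (x y : X'), dist (A' g x) (A' g y) ≤ K * dist x y + C :=
    fun g x y => ((hQA'.1 g).1 x y).2
  have hf_up : ∀ x y : X, dist (f x) (f y) ≤ K * dist x y + C :=
    fun x y => (hf.1 x y).2
  have hA_one : ∀ x : X, dist (A 1 x) x ≤ 2 * K * C := by
    intro x
    have hcoc := hQA.2 1 1 x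
    rw [mul_one] at hcoc
    have hlow := ((hQA.1 1).1 (A 1 x) x).1
    have h2 : (1/K) * dist (A 1 x) x ≤ 2 * C := by linarith
    have h3 := mul_le_mul_of_nonneg_left h2 hKnn
    have hfe : K * ((1/K) * dist (A 1 x) x) = dist (A 1 x) x := by field_simp
    rw [hfe] at h3
    linarith
  have hA'_one : ∀ x : X', dist (A' 1 x) x ≤ 2 * K * C := by
    intro x
    have hcoc := hQA'.2 1 1 x
    rw [mul_one] at hcoc
    have hlow := ((hQA'.1 1).1 (A' 1 x) x).1
    have h2 : (1/K) * dist (A' 1 x) x ≤ 2 * C := by linarith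
    have h3 := mul_le_mul_of_nonneg_left h2 hKnn
    have hfe : K * ((1/K) * dist (A' 1 x) x) = dist (A' 1 x) x := by field_simp
    rw [hfe] at h3
    linarith
  have hA_inv : ∀ (g : G) (x : X), dist (A g⁻¹ (A g x)) x ≤ C + 2 * K * C := by
    intro g x
    have h1 := hQA.2 g⁻¹ g x
    rw [inv_mul_cancel] at h1
    calc dist (A g⁻¹ (A g x)) x ≤ dist (A g⁻¹ (A g x)) (A 1 x) + dist (A 1 x) x :=
          dist_triangle _ _ _
      _ ≤ C + 2 * K * C := add_le_add h1 (hA_one x)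
  have hA'_inv : ∀ (g : G) (x : X'), dist (A' g⁻¹ (A' g x)) x ≤ C + 2 * K * C := by
    intro g x
    have h1 := hQA'.2 g⁻¹ g x
    rw [inv_mul_cancel] at h1
    calc dist (A' g⁻¹ (A' g x)) x ≤ dist (A' g⁻¹ (A' g x)) (A' 1 x) + dist (A' 1 x) x :=
          dist_triangle _ _ _
      _ ≤ C + 2 * K * C := add_le_add h1 (hA'_one x)
  -- finite core sets of indices
  set S : Set ι := {j : ι | (𝒜 j ∩ Metric.closedBall x0 (r0 + C' + 1)).Nonempty} with hS
  have hSfin : S.Finite := hlf.2 _ Metric.isBounded_closedBall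
  set S' : Set ι' := {j' : ι' | (𝒜' j' ∩ Metric.closedBall x0' (r0' + C' + 1)).Nonempty} with hS'
  have hS'fin : S'.Finite := hlf'.2 _ Metric.isBounded_closedBall
  -- reference points
  have hq : ∀ j : ι, ∃ y : X', y ∈ 𝒜' (fsharp j) := fun j => hlf'.1 (fsharp j)
  choose q hq using hq
  have hp : ∀ j' : ι', ∃ y : X, y ∈ 𝒜 (fsharp.symm j') := fun j' => hlf.1 (fsharp.symm j')
  choose p hp using hp
  obtain ⟨D, hD⟩ := (hSfin.image (fun j => dist x0' (q j))).bddAbove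
  obtain ⟨D', hD'⟩ := (hS'fin.image (fun j' => dist x0 (p j'))).bddAbove
  -- the uniform constants
  set E1 : ℝ := (K * (2*C + 2*K*C + K*r0) + C) + r + (K * D + C) + (C' + 1) with hE1
  set E2 : ℝ := (2*K*C + 2*C + K*r0') + (K * (K * D' + C) + C) + r + (K * (C'+1) + C) with hE2
  refine ⟨max 0 (max E1 E2), le_max_left _ _, fun i => ?_⟩
  have hE1le : ENNReal.ofReal E1 ≤ ENNReal.ofReal (max 0 (max E1 E2)) :=
    ENNReal.ofReal_le_ofReal (le_trans (le_max_left _ _) (le_max_right _ _))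
  have hE2le : ENNReal.ofReal E2 ≤ ENNReal.ofReal (max 0 (max E1 E2)) :=
    ENNReal.ofReal_le_ofReal (le_trans (le_max_right _ _) (le_max_right _ _))
  refine EMetric.hausdorffEdist_le_of_infEdist ?_ ?_
  · -- forward direction: points of f '' 𝒜 i are close to 𝒜' (fsharp i)
    rintro _ ⟨a, ha, rfl⟩
    obtain ⟨g, hg⟩ := hcbA a x0
    obtain ⟨y, hy, hdy⟩ := qipat_exists_close hC' (hcomp g i) ⟨a, ha, rfl⟩
    have hjS : (g • i) ∈ S := by
      refine ⟨y, hy, Metric.mem_closedBall.2 ?_⟩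
      calc dist y x0 ≤ dist y (A g a) + dist (A g a) x0 := dist_triangle _ _ _
        _ ≤ (C' + 1) + r0 := add_le_add (by rw [dist_comm]; exact hdy) hg
        _ ≤ r0 + C' + 1 := by linarith
    have hqD : dist x0' (q (g • i)) ≤ D := hD (Set.mem_image_of_mem _ hjS)
    have hkey : EMetric.hausdorffEdist ((A' g⁻¹) '' (𝒜' (g • fsharp i))) (𝒜' (fsharp i))
        ≤ ENNReal.ofReal C' := by
      have h := hcomp' g⁻¹ (g • fsharp i)
      rwa [inv_smul_smul] at h
    have hqmem : q (g • i) ∈ 𝒜' (g • fsharp i) := by rw [← hsharp g i]; exact hq (g • i)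
    obtain ⟨z, hz, hdz⟩ := qipat_exists_close hC' hkey ⟨q (g • i), hqmem, rfl⟩
    refine le_trans (qipat_infEdist_le hz ?_) hE1le
    -- distance chain
    have b1 : dist a (A g⁻¹ x0) ≤ 2*C + 2*K*C + K*r0 := by
      have t1 : dist a (A g⁻¹ (A g a)) ≤ C + 2*K*C := by
        rw [dist_comm]; exact hA_inv g a
      have t2 : dist (A g⁻¹ (A g a)) (A g⁻¹ x0) ≤ K * r0 + C := by
        have := hA_up g⁻¹ (A g a) x0
        linarith [mul_le_mul_of_nonneg_left hg hKnn]
      calc dist a (A g⁻¹ x0) ≤ dist a (A g⁻¹ (A g a)) + dist (A g⁻¹ (A g a)) (A g⁻¹ x0) :=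
            dist_triangle _ _ _
        _ ≤ 2*C + 2*K*C + K*r0 := by linarith
    have b2 : dist (f a) (f (A g⁻¹ x0)) ≤ K * (2*C + 2*K*C + K*r0) + C := by
      have := hf_up a (A g⁻¹ x0)
      linarith [mul_le_mul_of_nonneg_left b1 hKnn]
    have b3 : dist (f (A g⁻¹ x0)) (A' g⁻¹ x0') ≤ r := hequiv g⁻¹ x0
    have b4 : dist (A' g⁻¹ x0') (A' g⁻¹ (q (g • i))) ≤ K * D + C := by
      have := hA'_up g⁻¹ x0' (q (g • i))
      linarith [mul_le_mul_of_nonneg_left hqD hKnn]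
    calc dist (f a) z
        ≤ dist (f a) (A' g⁻¹ (q (g • i))) + dist (A' g⁻¹ (q (g • i))) z := dist_triangle _ _ _
      _ ≤ (dist (f a) (A' g⁻¹ x0') + dist (A' g⁻¹ x0') (A' g⁻¹ (q (g • i))))
            + dist (A' g⁻¹ (q (g • i))) z := by
          have := dist_triangle (f a) (A' g⁻¹ x0') (A' g⁻¹ (q (g • i))); linarith
      _ ≤ ((dist (f a) (f (A g⁻¹ x0)) + dist (f (A g⁻¹ x0)) (A' g⁻¹ x0'))
            + dist (A' g⁻¹ x0') (A' g⁻¹ (q (g • i))))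
            + dist (A' g⁻¹ (q (g • i))) z := by
          have := dist_triangle (f a) (f (A g⁻¹ x0)) (A' g⁻¹ x0'); linarith
      _ ≤ E1 := by rw [hE1]; linarith
  · -- backward direction: points of 𝒜' (fsharp i) are close to f '' 𝒜 i
    intro x' hx'
    obtain ⟨g, hg⟩ := hcbA' x' x0'
    obtain ⟨y', hy', hdy'⟩ := qipat_exists_close hC' (hcomp' g (fsharp i)) ⟨x', hx', rfl⟩
    have hy'' : y' ∈ 𝒜' (fsharp (g • i)) := by rw [hsharp g i]; exact hy'
    have hjS' : fsharp (g • i) ∈ S' := by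
      refine ⟨y', hy'', Metric.mem_closedBall.2 ?_⟩
      calc dist y' x0' ≤ dist y' (A' g x') + dist (A' g x') x0' := dist_triangle _ _ _
        _ ≤ (C' + 1) + r0' := add_le_add (by rw [dist_comm]; exact hdy') hg
        _ ≤ r0' + C' + 1 := by linarith
    have hpD' : dist x0 (p (fsharp (g • i))) ≤ D' := hD' (Set.mem_image_of_mem _ hjS')
    set pp : X := p (fsharp (g • i)) with hppdef
    have hpp : pp ∈ 𝒜 (g • i) := by
      have h := hp (fsharp (g • i))
      rwa [Equiv.symm_apply_apply] at h
    have hkey : EMetric.hausdorffEdist ((A g⁻¹) '' (𝒜 (g • i))) (𝒜 i) ≤ ENNReal.ofReal C' := by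
      have h := hcomp g⁻¹ (g • i)
      rwa [inv_smul_smul] at h
    obtain ⟨a, ha, hda⟩ := qipat_exists_close hC' hkey ⟨pp, hpp, rfl⟩
    refine le_trans (qipat_infEdist_le (Set.mem_image_of_mem f ha) ?_) hE2le
    have b1 : dist x' (A' g⁻¹ x0') ≤ 2*K*C + 2*C + K*r0' := by
      have t1 : dist x' (A' g⁻¹ (A' g x')) ≤ C + 2*K*C := by
        rw [dist_comm]; exact hA'_inv g x'
      have t2 : dist (A' g⁻¹ (A' g x')) (A' g⁻¹ x0') ≤ K * r0' + C := by
        have := hA'_up g⁻¹ (A' g x') x0'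
        linarith [mul_le_mul_of_nonneg_left hg hKnn]
      calc dist x' (A' g⁻¹ x0') ≤ dist x' (A' g⁻¹ (A' g x')) + dist (A' g⁻¹ (A' g x')) (A' g⁻¹ x0') :=
            dist_triangle _ _ _
        _ ≤ 2*K*C + 2*C + K*r0' := by linarith
    have b2 : dist (A' g⁻¹ x0') (A' g⁻¹ (f pp)) ≤ K * (K * D' + C) + C := by
      have hfp : dist x0' (f pp) ≤ K * D' + C := by
        have := hf_up x0 pp
        rw [hx0']
        linarith [mul_le_mul_of_nonneg_left hpD' hKnn]
      have := hA'_up g⁻¹ x0' (f pp)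
      linarith [mul_le_mul_of_nonneg_left hfp hKnn]
    have b3 : dist (A' g⁻¹ (f pp)) (f (A g⁻¹ pp)) ≤ r := by
      rw [dist_comm]; exact hequiv g⁻¹ pp
    have b4 : dist (f (A g⁻¹ pp)) (f a) ≤ K * (C' + 1) + C := by
      have := hf_up (A g⁻¹ pp) a
      linarith [mul_le_mul_of_nonneg_left hda hKnn]
    calc dist x' (f a)
        ≤ dist x' (f (A g⁻¹ pp)) + dist (f (A g⁻¹ pp)) (f a) := dist_triangle _ _ _
      _ ≤ (dist x' (A' g⁻¹ (f pp)) + dist (A' g⁻¹ (f pp)) (f (A g⁻¹ pp)))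
            + dist (f (A g⁻¹ pp)) (f a) := by
          have := dist_triangle x' (A' g⁻¹ (f pp)) (f (A g⁻¹ pp)); linarith
      _ ≤ ((dist x' (A' g⁻¹ x0') + dist (A' g⁻¹ x0') (A' g⁻¹ (f pp)))
            + dist (A' g⁻¹ (f pp)) (f (A g⁻¹ pp)))
            + dist (f (A g⁻¹ pp)) (f a) := by
          have := dist_triangle x' (A' g⁻¹ x0') (A' g⁻¹ (f pp)); linarith
      _ ≤ E2 := by rw [hE2]; linarith
end

section
/- There exist subsets A, B of the real line ℝ (with its standard metric) whose coarse intersection does not exist: there is no subset C ⊆ ℝ and no r₀ ≥ 0 such that for every r ≥ r₀ the Hausdorff distance between C and N_r(A) ∩ N_r(B) is finite. (For example, one may take A = {2ⁿ : n = 1, 2, 3, …}, choose a partition A = A₁ ∪ A₂ ∪ ⋯ into infinitely many infinite sets, and take B = ⋃ᵢ {a + 2i : a ∈ Aᵢ}.) -/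
/-!
Take `A = {4ⁿ}` and `B = {4ⁿ + sₙ}`, where `sₙ = (Nat.unpair n).1`, so every shift value `i`
occurs for infinitely many `n` and `sₙ ≤ n`. Both `4ⁿ` and `4ⁿ + sₙ` lie in the block
`[4ⁿ, 2·4ⁿ]`, and distinct blocks are far apart. Hence `N_r(A) ∩ N_r(B)` consists of
neighbourhoods of the points `4ⁿ` with `sₙ ≤ 2r`, plus a bounded set. For `i > 2r` the points
`4ⁿ` with `sₙ = i` lie in `N_i(A) ∩ N_i(B)` but arbitrarily far from `N_r(A) ∩ N_r(B)`, so the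
intersections at radii `r` and `i` are at infinite Hausdorff distance, and no `C` can be
coarsely equivalent to both.
-/

/-- The closed `r`-neighborhood of a subset of `ℝ`. -/
def nbhd (r : ℝ) (Y : Set ℝ) : Set ℝ := {x : ℝ | ∃ y ∈ Y, dist x y ≤ r}

open Metric

lemma Metric.hausdorffEDist_eq_top_of_forall_exists_le_dist {α : Type*} [PseudoMetricSpace α]
    {s t : Set α} (h : ∀ M : ℝ, ∃ x ∈ s, ∀ y ∈ t, M ≤ dist x y) :
    hausdorffEDist s t = ⊤ := by
  by_contra hne
  obtain ⟨x, hxs, hx⟩ := h ((hausdorffEDist s t).toReal + 1)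
  have hfar : ENNReal.ofReal ((hausdorffEDist s t).toReal + 1) ≤ infEDist x t :=
    le_infEDist.2 fun y hy => by
      rw [edist_dist]
      exact ENNReal.ofReal_le_ofReal (hx y hy)
  have := (hfar.trans (infEDist_le_hausdorffEDist_of_mem hxs)).trans_eq
    (ENNReal.ofReal_toReal hne).symm
  rw [ENNReal.ofReal_le_ofReal_iff ENNReal.toReal_nonneg] at this
  linarith

namespace CoarseIntersection

def shift (n : ℕ) : ℝ := (Nat.unpair n).1

def A : Set ℝ := Set.range fun n : ℕ => (4 : ℝ) ^ n

def B : Set ℝ := Set.range fun n : ℕ => (4 : ℝ) ^ n + shift n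

def block (n : ℕ) : Set ℝ := Set.Icc (4 ^ n) (2 * 4 ^ n)

lemma shift_nonneg (n : ℕ) : 0 ≤ shift n := Nat.cast_nonneg _

lemma shift_pair (i k : ℕ) : shift (Nat.pair i k) = i := by
  simp [shift, Nat.unpair_pair]

lemma pow_mem_block (n : ℕ) : (4 : ℝ) ^ n ∈ block n :=
  ⟨le_rfl, by linarith [pow_nonneg (zero_le_four : (0 : ℝ) ≤ 4) n]⟩

lemma pow_add_shift_mem_block (n : ℕ) : (4 : ℝ) ^ n + shift n ∈ block n := by
  have hsn : shift n < 4 ^ n := by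
    calc shift n ≤ n := Nat.cast_le.2 (Nat.unpair_left_le n)
      _ < 4 ^ n := by exact_mod_cast Nat.lt_pow_self (by norm_num)
  exact ⟨by linarith [shift_nonneg n], by linarith⟩

lemma half_le_sub_of_mem_block {n m : ℕ} (hnm : n < m) {x y : ℝ} (hx : x ∈ block n)
    (hy : y ∈ block m) : 4 ^ m / 2 ≤ y - x := by
  have : (4 : ℝ) ^ (n + 1) ≤ 4 ^ m := pow_le_pow_right₀ (by norm_num) hnm
  rw [pow_succ] at this
  linarith [hx.2, hy.1]

lemma half_le_dist_of_mem_block {n m : ℕ} (hnm : n ≠ m) {x y : ℝ} (hx : x ∈ block n)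
    (hy : y ∈ block m) : 4 ^ max n m / 2 ≤ dist x y := by
  rcases hnm.lt_or_gt with h | h
  · rw [max_eq_right h.le, Real.dist_eq, abs_sub_comm]
    exact (half_le_sub_of_mem_block h hx hy).trans (le_abs_self _)
  · rw [max_eq_left h.le, Real.dist_eq]
    exact (half_le_sub_of_mem_block h hy hx).trans (le_abs_self _)

lemma pow_mem_inter {r : ℝ} {n : ℕ} (hn : shift n ≤ r) : (4 : ℝ) ^ n ∈ nbhd r A ∩ nbhd r B :=
  ⟨⟨_, ⟨n, rfl⟩, by simpa using (shift_nonneg n).trans hn⟩,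
    ⟨_, ⟨n, rfl⟩, by simpa [Real.dist_eq, abs_of_nonneg (shift_nonneg n)] using hn⟩⟩

lemma exists_near_pow_of_mem_inter {r x : ℝ} (hx : x ∈ nbhd r A ∩ nbhd r B) :
    ∃ n, dist x (4 ^ n) ≤ r ∧ (shift n ≤ 2 * r ∨ (4 : ℝ) ^ n ≤ 4 * r) := by
  obtain ⟨⟨_, ⟨n, rfl⟩, hxn⟩, ⟨_, ⟨m, rfl⟩, hxm⟩⟩ := hx
  have hnm : dist ((4 : ℝ) ^ n) (4 ^ m + shift m) ≤ 2 * r := by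
    linarith [dist_triangle_left ((4 : ℝ) ^ n) (4 ^ m + shift m) x]
  refine ⟨n, hxn, ?_⟩
  by_cases h : n = m
  · subst h
    left
    simpa [Real.dist_eq, abs_of_nonneg (shift_nonneg n)] using hnm
  · right
    have hfar := half_le_dist_of_mem_block h (pow_mem_block n) (pow_add_shift_mem_block m)
    have : (4 : ℝ) ^ n ≤ 4 ^ max n m := pow_le_pow_right₀ (by norm_num) (le_max_left n m)
    linarith

lemma half_sub_le_dist_of_mem_inter {r x : ℝ} {m : ℕ} (hm : 2 * r < shift m)
    (hx : x ∈ nbhd r A ∩ nbhd r B) : (4 : ℝ) ^ m / 2 - 5 * r ≤ dist (4 ^ m) x := by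
  obtain ⟨n, hxn, hn | hn⟩ := exists_near_pow_of_mem_inter hx
  · have hne : m ≠ n := by rintro rfl; linarith
    have hfar := half_le_dist_of_mem_block hne (pow_mem_block m) (pow_mem_block n)
    have : (4 : ℝ) ^ m ≤ 4 ^ max m n := pow_le_pow_right₀ (by norm_num) (le_max_left m n)
    linarith [dist_triangle (4 ^ m) x (4 ^ n), dist_nonneg (x := x) (y := (4 : ℝ) ^ n)]
  · have : dist ((4 : ℝ) ^ m) (4 ^ n) ≤ dist (4 ^ m) x + dist x (4 ^ n) := dist_triangle _ _ _
    rw [Real.dist_eq] at this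
    linarith [le_abs_self ((4 : ℝ) ^ m - 4 ^ n), pow_nonneg (zero_le_four : (0 : ℝ) ≤ 4) m,
      dist_nonneg (x := x) (y := 4 ^ n)]

lemma hausdorffEDist_inter_eq_top {r : ℝ} {i : ℕ} (hi : 2 * r < i) :
    hausdorffEDist (nbhd i A ∩ nbhd i B) (nbhd r A ∩ nbhd r B) = ⊤ := by
  refine hausdorffEDist_eq_top_of_forall_exists_le_dist fun M => ?_
  obtain ⟨k, hk⟩ := exists_nat_gt (2 * (M + 5 * r))
  have hpow : (k : ℝ) ≤ 4 ^ Nat.pair i k :=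
    calc (k : ℝ) ≤ 4 ^ k := by exact_mod_cast (Nat.lt_pow_self (by norm_num)).le
      _ ≤ 4 ^ Nat.pair i k := pow_le_pow_right₀ (by norm_num) (Nat.right_le_pair i k)
  refine ⟨_, pow_mem_inter (shift_pair i k).le, fun y hy => ?_⟩
  have := half_sub_le_dist_of_mem_inter (m := Nat.pair i k) (by rwa [shift_pair]) hy
  linarith

end CoarseIntersection

/-- There exist subsets `A, B ⊆ ℝ` whose coarse intersection does not exist: no subset
`C ⊆ ℝ` is at finite Hausdorff distance from `N_r(A) ∩ N_r(B)` for all sufficiently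
large `r`. -/
theorem coarse_intersection_may_not_exist :
    ∃ A B : Set ℝ,
      ¬ ∃ (C : Set ℝ) (r₀ : ℝ), 0 ≤ r₀ ∧
        ∀ r : ℝ, r₀ ≤ r →
          EMetric.hausdorffEdist C (nbhd r A ∩ nbhd r B) ≠ ⊤ := by
  refine ⟨CoarseIntersection.A, CoarseIntersection.B, ?_⟩
  rintro ⟨C, r₀, hr₀, hC⟩
  obtain ⟨i, hi⟩ := exists_nat_gt (2 * r₀)
  have hfinite : hausdorffEDist (nbhd i CoarseIntersection.A ∩ nbhd i CoarseIntersection.B)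
      (nbhd r₀ CoarseIntersection.A ∩ nbhd r₀ CoarseIntersection.B) < ⊤ :=
    hausdorffEDist_triangle.trans_lt <| ENNReal.add_lt_top.2
      ⟨hausdorffEDist_comm (s := C) ▸ (hC i (by linarith)).lt_top, (hC r₀ le_rfl).lt_top⟩
  exact hfinite.ne (CoarseIntersection.hausdorffEDist_inter_eq_top hi)
end

section
/- For every angle α ∈ ℝ there exist a bijection β : ℤ² → ℤ² and a constant C ≥ 0 such that for all v ∈ ℤ², the Euclidean distance between β(v) (viewed as a point of ℝ²) and R_α(v) is at most C, where R_α : ℝ² → ℝ² is the rotation by angle α about the origin, R_α(x,y) = (x·cos α − y·sin α, x·sin α + y·cos α). In particular, every (e.g. irrational) rotation of the plane about the origin agrees with a bijection of the integer lattice ℤ² up to uniformly bounded error. -/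
/-!
Paeth's three-shear decomposition: for `cos (α/2) ≠ 0`, multiplication by `exp (α i)` is the
composite `A ∘ B ∘ A` of the real-linear shears `A : x + y i ↦ (x - tan (α/2) y) + y i` and
`B : x + y i ↦ x + (y + sin α x) i`. A shear `x + y i ↦ (x + t y) + y i` moves each lattice point
within distance `1/2` of its image under the lattice bijection `(a, b) ↦ (a + round (t b), b)`,
and bounded-error approximations compose along Lipschitz maps, so the composite of the three
lattice shears stays within bounded distance of the rotation. In the remaining case `α ≡ π (mod 2π)`
the rotation is `z ↦ -z`, which maps the lattice onto itself.
-/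

/-- The point of the plane (modelled on `ℂ`) corresponding to a lattice point of `ℤ²`. -/
noncomputable def latticePt (v : ℤ × ℤ) : ℂ :=
  ((v.1 : ℝ) : ℂ) + ((v.2 : ℝ) : ℂ) * Complex.I

/-- The image of the lattice point `v ∈ ℤ²` under the rotation of the plane by angle `α`
about the origin: `R_α(x,y) = (x·cos α − y·sin α, x·sin α + y·cos α)`. -/
noncomputable def rotLatticePt (α : ℝ) (v : ℤ × ℤ) : ℂ :=
  (((v.1 : ℝ) * Real.cos α - (v.2 : ℝ) * Real.sin α : ℝ) : ℂ) +
    (((v.1 : ℝ) * Real.sin α + (v.2 : ℝ) * Real.cos α : ℝ) : ℂ) * Complex.I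

open Complex

@[simp] theorem latticePt_re (v : ℤ × ℤ) : (latticePt v).re = v.1 := by simp [latticePt]

@[simp] theorem latticePt_im (v : ℤ × ℤ) : (latticePt v).im = v.2 := by simp [latticePt]

def IsLatticeApprox (β : ℤ × ℤ ≃ ℤ × ℤ) (f : ℂ → ℂ) : Prop :=
  ∃ C : ℝ, ∀ v, dist (latticePt (β v)) (f (latticePt v)) ≤ C

theorem IsLatticeApprox.trans {β γ : ℤ × ℤ ≃ ℤ × ℤ} {f g : ℂ → ℂ} {K : NNReal}
    (hβ : IsLatticeApprox β f) (hγ : IsLatticeApprox γ g) (hg : LipschitzWith K g) :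
    IsLatticeApprox (β.trans γ) (g ∘ f) := by
  obtain ⟨Cβ, hCβ⟩ := hβ
  obtain ⟨Cγ, hCγ⟩ := hγ
  refine ⟨Cγ + K * Cβ, fun v => ?_⟩
  calc dist (latticePt (γ (β v))) (g (f (latticePt v)))
      ≤ dist (latticePt (γ (β v))) (g (latticePt (β v)))
        + dist (g (latticePt (β v))) (g (f (latticePt v))) := dist_triangle _ _ _
    _ ≤ Cγ + K * Cβ := by
        gcongr
        · exact hCγ (β v)
        · exact (hg.dist_le_mul _ _).trans (by gcongr; exact hCβ v)

def shearFst (f : ℤ → ℤ) : ℤ × ℤ ≃ ℤ × ℤ where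
  toFun v := (v.1 + f v.2, v.2)
  invFun v := (v.1 - f v.2, v.2)
  left_inv v := by simp
  right_inv v := by simp

def shearSnd (f : ℤ → ℤ) : ℤ × ℤ ≃ ℤ × ℤ where
  toFun v := (v.1, v.2 + f v.1)
  invFun v := (v.1, v.2 - f v.1)
  left_inv v := by simp
  right_inv v := by simp

noncomputable def shearRe (t : ℝ) : ℂ →L[ℝ] ℂ := .id ℝ ℂ + t • (ofRealCLM ∘L imCLM)

noncomputable def shearIm (s : ℝ) : ℂ →L[ℝ] ℂ := .id ℝ ℂ + s • I • (ofRealCLM ∘L reCLM)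

@[simp] theorem shearRe_apply (t : ℝ) (z : ℂ) : shearRe t z = z + (t * z.im : ℝ) := by
  simp [shearRe]

@[simp] theorem shearIm_apply (s : ℝ) (z : ℂ) : shearIm s z = z + I * (s * z.re : ℝ) := by
  simp [shearIm, mul_left_comm]

theorem isLatticeApprox_shearFst (t : ℝ) :
    IsLatticeApprox (shearFst fun n => round (t * n)) (shearRe t) := by
  refine ⟨1 / 2, fun v => ?_⟩
  have h : latticePt (shearFst (fun n => round (t * n)) v) - shearRe t (latticePt v)
      = ((round (t * v.2) - t * v.2 : ℝ) : ℂ) := by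
    apply Complex.ext <;> simp [shearFst]
  rw [dist_eq_norm, h, norm_real, Real.norm_eq_abs, abs_sub_comm]
  exact abs_sub_round _

theorem isLatticeApprox_shearSnd (s : ℝ) :
    IsLatticeApprox (shearSnd fun n => round (s * n)) (shearIm s) := by
  refine ⟨1 / 2, fun v => ?_⟩
  have h : latticePt (shearSnd (fun n => round (s * n)) v) - shearIm s (latticePt v)
      = I * ((round (s * v.1) - s * v.1 : ℝ) : ℂ) := by
    apply Complex.ext <;> simp [shearSnd]
  rw [dist_eq_norm, h, norm_mul, norm_I, one_mul, norm_real, Real.norm_eq_abs, abs_sub_comm]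
  exact abs_sub_round _

theorem isLatticeApprox_neg : IsLatticeApprox (Equiv.neg _) Neg.neg :=
  ⟨0, fun v => by simp [latticePt, add_comm]⟩

theorem exp_mul_I_mul_eq_shearRe_shearIm_shearRe {α : ℝ} (hc : Real.cos (α / 2) ≠ 0) :
    (cexp (α * I) * ·) =
      shearRe (-Real.tan (α / 2)) ∘ shearIm (Real.sin α) ∘ shearRe (-Real.tan (α / 2)) := by
  have hα : α = 2 * (α / 2) := by ring
  have hsin : Real.sin α = 2 * Real.sin (α / 2) * Real.cos (α / 2) := by
    rw [hα, Real.sin_two_mul]; ring_nf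
  have hcos : Real.cos α = 2 * Real.cos (α / 2) ^ 2 - 1 := by
    rw [hα, Real.cos_two_mul]; ring_nf
  have hpyth := Real.sin_sq_add_cos_sq (α / 2)
  funext z
  apply Complex.ext <;>
    simp only [exp_mul_I, ← ofReal_cos, ← ofReal_sin, Function.comp_apply, shearRe_apply,
      shearIm_apply, add_re, add_im, mul_re, mul_im, ofReal_re, ofReal_im, I_re, I_im] <;>
    rw [hsin, hcos, Real.tan_eq_sin_div_cos] <;>
    field_simp
  · linear_combination (2 * z.re * Real.cos (α / 2) - 2 * z.im * Real.sin (α / 2)) * hpyth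
  · linear_combination (2 * z.im) * hpyth

theorem exp_mul_I_eq_neg_one_of_cos_half_eq_zero {α : ℝ} (hc : Real.cos (α / 2) = 0) :
    cexp (α * I) = -1 := by
  have hα : α = 2 * (α / 2) := by ring
  have hsin : Real.sin α = 0 := by rw [hα, Real.sin_two_mul, hc, mul_zero]
  have hcos : Real.cos α = -1 := by rw [hα, Real.cos_two_mul, hc]; norm_num
  rw [exp_mul_I, ← ofReal_cos, ← ofReal_sin, hsin, hcos]
  simp

theorem rotLatticePt_eq_exp_mul_I_mul (α : ℝ) (v : ℤ × ℤ) :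
    rotLatticePt α v = cexp (α * I) * latticePt v := by
  simp only [rotLatticePt, latticePt, exp_mul_I]
  push_cast
  linear_combination (-(v.2 * sin (α : ℂ))) * I_sq

theorem exists_isLatticeApprox_exp_mul_I_mul (α : ℝ) :
    ∃ β, IsLatticeApprox β (cexp (α * I) * ·) := by
  by_cases hc : Real.cos (α / 2) = 0
  · rw [exp_mul_I_eq_neg_one_of_cos_half_eq_zero hc]
    simpa using ⟨_, isLatticeApprox_neg⟩
  · rw [exp_mul_I_mul_eq_shearRe_shearIm_shearRe hc]
    exact ⟨_, ((isLatticeApprox_shearFst _).trans (isLatticeApprox_shearSnd _)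
      (shearIm _).lipschitz).trans (isLatticeApprox_shearFst _) (shearRe _).lipschitz⟩

/-- Every rotation of the plane about the origin agrees with a bijection of the integer
lattice `ℤ²` up to uniformly bounded error: for every angle `α` there are a bijection
`β : ℤ² → ℤ²` and a constant `C ≥ 0` with `dist (β v) (R_α v) ≤ C` for all `v ∈ ℤ²`. -/
theorem rotation_coarsely_equivalent_to_lattice_bijection (α : ℝ) :
    ∃ (β : ℤ × ℤ ≃ ℤ × ℤ) (C : ℝ), 0 ≤ C ∧
      ∀ v : ℤ × ℤ, dist (latticePt (β v)) (rotLatticePt α v) ≤ C := by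
  obtain ⟨β, C, hC⟩ := exists_isLatticeApprox_exp_mul_I_mul α
  refine ⟨β, C, dist_nonneg.trans (hC 0), fun v => ?_⟩
  rw [rotLatticePt_eq_exp_mul_I_mul]
  exact hC v
end

section
/- Let n ≥ 2 and let H₀, H₁, …, Hₙ be n+1 linear hyperplanes in ℝⁿ (linear subspaces of dimension n−1) in general position, meaning that the intersection of any n of them is {0}. Then the collection {H₀, …, Hₙ} is a rigid pattern: for all K ≥ 1, C ≥ 0 and R ≥ 0 there exists R' ≥ 0 (depending only on K, C, R and the hyperplanes) such that if f : ℝⁿ → ℝⁿ is a (K,C)-quasi-isometry with the property that for each j ∈ {0, …, n} and each v ∈ ℝⁿ there exists w ∈ ℝⁿ with the Hausdorff distance between f(v + Hⱼ) and w + Hⱼ at most R, then there exist λ ∈ ℝ with λ ≠ 0 and b ∈ ℝⁿ such that ‖f(x) − (λ·x + b)‖ ≤ R' for all x ∈ ℝⁿ; that is, f is within distance R' of an affine homothety. -/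
/-- The affine subspace through `v` parallel to the linear subspace `V`. -/
def affTranslate {n : ℕ} (v : EuclideanSpace ℝ (Fin n))
    (V : Submodule ℝ (EuclideanSpace ℝ (Fin n))) : Set (EuclideanSpace ℝ (Fin n)) :=
  (fun x => v + x) '' (V : Set (EuclideanSpace ℝ (Fin n)))

/-!
Write `H j = (ℝ ∙ v j)ᗮ`. General position lets the normals be scaled so that `∑ j, v j = 0`,
and then the families `(⟪v j, x⟫)_j` are exactly the `t` with `∑ j, t j = 0`. Since `f` moves
each level set of `⟪v j, ·⟫` close to another one, `⟪v j, f x⟫` depends, up to a bounded error,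
only on `⟪v j, x⟫`, through some `F j`; summing over `j` gives the coarse Cauchy equation
`∑ j, F j (t j) ≈ 0` whenever `∑ j, t j = 0`. Three indices make each `F j` quasi-additive,
and the Hyers–Ulam limit `lim F j (2 ^ k * t) / 2 ^ k` makes all of them uniformly close to one
linear map `t ↦ λ * t`. So `f x - (λ • x + f 0)` has bounded coordinates, hence is bounded, and
`λ ≠ 0` because a quasi-isometry of `ℝⁿ` has unbounded image.
-/

open Filter Topology Bornology Module Metric Set
open scoped RealInnerProductSpace

theorem IsQIEmbedding.isBounded_image {X Y : Type*} [MetricSpace X] [MetricSpace Y] {K C : ℝ}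
    {f : X → Y} (hf : IsQIEmbedding K C f) {s : Set X} (hs : IsBounded s) :
    IsBounded (f '' s) := by
  obtain ⟨r, hr⟩ := Metric.isBounded_iff.1 hs
  refine Metric.isBounded_iff.2 ⟨|K| * r + C, ?_⟩
  rintro _ ⟨x, hx, rfl⟩ _ ⟨y, hy, rfl⟩
  calc dist (f x) (f y) ≤ K * dist x y + C := (hf x y).2
    _ ≤ |K| * r + C := by
      gcongr ?_ + C
      exact (mul_le_mul_of_nonneg_right (le_abs_self K) dist_nonneg).trans
        (mul_le_mul_of_nonneg_left (hr hx hy) (abs_nonneg K))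

theorem IsQIEmbedding.isBounded_of_isBounded_image {X Y : Type*} [MetricSpace X] [MetricSpace Y]
    {K C : ℝ} {f : X → Y} (hf : IsQIEmbedding K C f) (hK : 0 < K) {s : Set X}
    (hs : IsBounded (f '' s)) : IsBounded s := by
  obtain ⟨r, hr⟩ := Metric.isBounded_iff.1 hs
  refine Metric.isBounded_iff.2 ⟨K * (r + C), fun x hx y hy => ?_⟩
  have h := (hf x y).1.trans (hr (mem_image_of_mem f hx) (mem_image_of_mem f hy))
  rwa [one_div, sub_le_iff_le_add, inv_mul_le_iff₀ hK] at h

theorem exists_addMonoidHom_abs_sub_le {G : Type*} [AddCommMonoid G] (h : G → ℝ) (δ : ℝ)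
    (hadd : ∀ x y, |h (x + y) - h x - h y| ≤ δ) :
    ∃ L : G →+ ℝ, ∀ x, |h x - L x| ≤ δ := by
  set a : G → ℕ → ℝ := fun x k => h (2 ^ k • x) / 2 ^ k
  have hdefect : ∀ x y k, |a (x + y) k - a x k - a y k| ≤ δ * (1 / 2) ^ k := by
    intro x y k
    have : a (x + y) k - a x k - a y k =
        (h (2 ^ k • x + 2 ^ k • y) - h (2 ^ k • x) - h (2 ^ k • y)) / 2 ^ k := by
      simp only [a, smul_add]; ring
    rw [this, abs_div, abs_of_pos (by positivity : (0 : ℝ) < 2 ^ k), one_div_pow,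
      ← div_eq_mul_one_div]
    exact div_le_div_of_nonneg_right (hadd _ _) (by positivity)
  have hdouble : ∀ x k, a (x + x) k = 2 * a x (k + 1) := by
    intro x k
    simp only [a, ← two_nsmul, smul_smul, ← pow_succ]
    rw [pow_succ (2 : ℝ)]
    field_simp
  have hstep : ∀ x k, dist (a x k) (a x (k + 1)) ≤ δ / 2 * (1 / 2) ^ k := by
    intro x k
    have h := hdefect x x k
    rw [hdouble] at h
    rw [Real.dist_eq, abs_sub_comm]
    calc |a x (k + 1) - a x k| = |2 * a x (k + 1) - a x k - a x k| / 2 := by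
          rw [← abs_two, ← abs_div, abs_two]; ring_nf
      _ ≤ δ / 2 * (1 / 2) ^ k := by linarith
  choose L hL using fun x =>
    cauchySeq_tendsto_of_complete (cauchySeq_of_le_geometric _ _ (by norm_num) (hstep x))
  have hLadd : ∀ x y, L (x + y) = L x + L y := by
    intro x y
    have hlim := ((hL (x + y)).sub (hL x)).sub (hL y)
    have hzero : Tendsto (fun k => a (x + y) k - a x k - a y k) atTop (𝓝 0) := by
      refine squeeze_zero_norm (hdefect x y) ?_
      simpa using (tendsto_pow_atTop_nhds_zero_of_lt_one (by norm_num : (0 : ℝ) ≤ 1 / 2)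
        (by norm_num)).const_mul δ
    linarith [tendsto_nhds_unique hlim hzero]
  refine ⟨AddMonoidHom.mk' L hLadd, fun x => ?_⟩
  have := dist_le_of_le_geometric_of_tendsto₀ _ _ (by norm_num) (hstep x) (hL x)
  simpa [a, Real.dist_eq] using this.trans_eq (by ring)

theorem exists_abs_sub_mul_le_of_abs_add_sub_le (h : ℝ → ℝ) (δ : ℝ) {s : Set ℝ}
    (hs : s ∈ 𝓝 0) (hbdd : IsBounded (h '' s)) (hadd : ∀ x y, |h (x + y) - h x - h y| ≤ δ) :
    ∃ lam : ℝ, ∀ x, |h x - lam * x| ≤ δ := by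
  obtain ⟨L, hL⟩ := exists_addMonoidHom_abs_sub_le h δ hadd
  have hLbdd : IsBounded (L '' s) := by
    obtain ⟨B, hB⟩ := isBounded_iff_forall_norm_le.1 hbdd
    refine isBounded_iff_forall_norm_le.2 ⟨B + δ, ?_⟩
    rintro _ ⟨x, hx, rfl⟩
    have hBx := hB _ ⟨x, hx, rfl⟩
    rw [Real.norm_eq_abs] at hBx ⊢
    linarith [abs_sub_abs_le_abs_sub (L x) (h x), abs_sub_comm (L x) (h x), hL x]
  refine ⟨L 1, fun x => ?_⟩
  have hlin := map_real_smul L (L.continuous_of_isBounded_nhds_zero hs hLbdd) x 1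
  simp only [smul_eq_mul, mul_one] at hlin
  simpa [hlin, mul_comm] using hL x

theorem exists_abs_sub_mul_le_of_abs_sum_le {ι : Type*} [Fintype ι]
    (hι : 2 < Fintype.card ι) (F : ι → ℝ → ℝ) (M : ℝ) (hF0 : ∀ j, F j 0 = 0)
    (hbdd : ∀ j, IsBounded (F j '' Metric.ball 0 1))
    (hF : ∀ s : ι → ℝ, ∑ j, s j = 0 → |∑ j, F j (s j)| ≤ M) :
    ∃ lam : ℝ, ∀ j t, |F j t - lam * t| ≤ 4 * M := by
  classical
  obtain ⟨i, j, k, hij, hik, hjk⟩ := Fintype.two_lt_card_iff.1 hι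
  have hsupp : ∀ (S : Finset ι) (s : ι → ℝ), (∀ m ∉ S, s m = 0) →
      ∑ m, F m (s m) = ∑ m ∈ S, F m (s m) := fun S s hs =>
    (Finset.sum_subset (Finset.subset_univ S) fun m _ hm => by rw [hs m hm, hF0]).symm
  have hpair : ∀ a b, a ≠ b → ∀ t, |F a t + F b (-t)| ≤ M := by
    intro a b hab t
    have := hF (Pi.single a t + Pi.single b (-t)) (by simp [Finset.sum_add_distrib])
    rw [hsupp {a, b} _ (by intro m hm; simp_all [Pi.single_apply]), Finset.sum_pair hab] at this
    simpa [hab, hab.symm] using this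
  have htriple : ∀ t t', |F i (t + t') + F j (-t) + F k (-t')| ≤ M := by
    intro t t'
    have := hF (Pi.single i (t + t') + Pi.single j (-t) + Pi.single k (-t'))
      (by simp [Finset.sum_add_distrib])
    rw [hsupp {i, j, k} _ (by intro m hm; simp_all [Pi.single_apply]),
      Finset.sum_insert (by simp [hij, hik]), Finset.sum_pair hjk, ← add_assoc] at this
    simpa [hij, hik, hjk, hij.symm, hik.symm, hjk.symm] using this
  have hadd : ∀ t t', |F i (t + t') - F i t - F i t'| ≤ 3 * M := by
    intro t t'
    -- the triple relation for `(t, t')` minus the pair relations for `t` and for `t'`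
    have h₁ := abs_le.1 (htriple t t')
    have h₂ := abs_le.1 (hpair i j hij t)
    have h₃ := abs_le.1 (hpair i k hik t')
    rw [abs_le]
    constructor <;> linarith
  obtain ⟨lam, hlam⟩ := exists_abs_sub_mul_le_of_abs_add_sub_le (F i) (3 * M)
    (Metric.ball_mem_nhds 0 one_pos) (hbdd i) hadd
  have hM : 0 ≤ M := by simpa [hF0] using hF 0 (by simp)
  refine ⟨lam, fun m t => ?_⟩
  rcases eq_or_ne m i with rfl | hmi
  · linarith [hlam t]
  · have hm : |F m t + F i (-t)| ≤ M := by simpa [add_comm] using hpair i m hmi.symm (-t)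
    calc |F m t - lam * t| = |(F m t + F i (-t)) - (F i (-t) - lam * -t)| := by ring_nf
      _ ≤ M + 3 * M := (abs_sub _ _).trans (add_le_add hm (hlam (-t)))
      _ = 4 * M := by ring

section InnerCoordinates

variable {E : Type*} [NormedAddCommGroup E] [InnerProductSpace ℝ E]

noncomputable def innerPi {κ : Type*} (u : κ → E) : E →ₗ[ℝ] κ → ℝ :=
  LinearMap.pi fun i => innerₛₗ ℝ (u i)

@[simp]
theorem innerPi_apply {κ : Type*} (u : κ → E) (x : E) (i : κ) : innerPi u x i = ⟪u i, x⟫ := rfl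

theorem ker_innerPi {κ : Type*} (u : κ → E) : LinearMap.ker (innerPi u) = ⨅ i, (ℝ ∙ u i)ᗮ := by
  ext x
  simp [Submodule.mem_iInf, Submodule.mem_orthogonal_singleton_iff_inner_right, funext_iff]

theorem surjective_innerPi_ne [FiniteDimensional ℝ E] {ι : Type*} [Fintype ι] {u : ι → E}
    (hcard : Fintype.card ι = finrank ℝ E + 1) {j : ι}
    (hgen : ⨅ (i) (_ : i ≠ j), (ℝ ∙ u i)ᗮ = ⊥) :
    Function.Surjective (innerPi fun i : {i // i ≠ j} => u i) := by
  classical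
  rw [← LinearMap.injective_iff_surjective_of_finrank_eq_finrank (by simp [hcard]),
    ← LinearMap.ker_eq_bot, ker_innerPi, ← hgen, iInf_subtype']

theorem exists_sum_smul_eq_zero [FiniteDimensional ℝ E] {ι : Type*} [Fintype ι] {u : ι → E}
    (hcard : Fintype.card ι = finrank ℝ E + 1)
    (hgen : ∀ j, ⨅ (i) (_ : i ≠ j), (ℝ ∙ u i)ᗮ = ⊥) :
    ∃ c : ι → ℝ, (∀ j, c j ≠ 0) ∧ ∑ j, c j • u j = 0 := by
  classical
  have hdep : ¬ LinearIndependent ℝ u := fun h => by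
    have := h.fintype_card_le_finrank; omega
  obtain ⟨c, hc, i₀, hi₀⟩ := Fintype.not_linearIndependent_iff.1 hdep
  refine ⟨c, fun j hj => hi₀ ?_, hc⟩
  have hne : i₀ ≠ j := by rintro rfl; exact hi₀ hj
  obtain ⟨x, hx⟩ := surjective_innerPi_ne hcard (hgen j) (Pi.single ⟨i₀, hne⟩ 1)
  have hterm : ∀ i, c i * ⟪u i, x⟫ = if i = i₀ then c i₀ else 0 := by
    intro i
    by_cases hij : i = j
    · subst hij; simp [hj, hne.symm]
    · have := congrFun hx ⟨i, hij⟩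
      simp only [innerPi_apply, Pi.single_apply, Subtype.ext_iff] at this
      rw [this]; split_ifs <;> simp_all
  simpa [sum_inner, real_inner_smul_left, hterm] using congrArg (fun y => ⟪y, x⟫) hc

theorem exists_ne_zero_eq_orthogonal_span_singleton [FiniteDimensional ℝ E] (H : Submodule ℝ E)
    (hH : finrank ℝ H + 1 = finrank ℝ E) : ∃ u : E, u ≠ 0 ∧ H = (ℝ ∙ u)ᗮ := by
  have h1 : finrank ℝ Hᗮ = 1 := by have := H.finrank_add_finrank_orthogonal; omega
  obtain ⟨⟨u, hu⟩, hu0⟩ := Module.finrank_pos_iff_exists_ne_zero.1 (h1 ▸ one_pos)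
  have hu0' : u ≠ 0 := fun h => hu0 (Subtype.ext h)
  have hspan : (ℝ ∙ u) = Hᗮ := Submodule.eq_of_le_of_finrank_eq
    ((Submodule.span_singleton_le_iff_mem _ _).2 hu) (by rw [finrank_span_singleton hu0', h1])
  exact ⟨u, hu0', by rw [hspan, Submodule.orthogonal_orthogonal]⟩

theorem exists_sum_eq_zero_and_eq_orthogonal_span_singleton [FiniteDimensional ℝ E] {ι : Type*}
    [Fintype ι] (H : ι → Submodule ℝ E) (hdim : ∀ j, finrank ℝ (H j) + 1 = finrank ℝ E)
    (hcard : Fintype.card ι = finrank ℝ E + 1) (hgen : ∀ j, ⨅ (i) (_ : i ≠ j), H i = ⊥) :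
    ∃ v : ι → E, (∀ j, v j ≠ 0) ∧ H = (fun j => (ℝ ∙ v j)ᗮ) ∧ ∑ j, v j = 0 := by
  choose u hu0 hHu using fun j => exists_ne_zero_eq_orthogonal_span_singleton (H j) (hdim j)
  obtain ⟨c, hc0, hc⟩ := exists_sum_smul_eq_zero hcard fun j => by simpa only [hHu] using hgen j
  refine ⟨fun j => c j • u j, fun j => smul_ne_zero (hc0 j) (hu0 j), funext fun j => ?_, hc⟩
  rw [hHu j, Submodule.span_singleton_smul_eq (hc0 j).isUnit]

theorem exists_innerPi_eq_of_sum_eq_zero {ι : Type*} [Fintype ι] {v : ι → E}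
    (hsum : ∑ i, v i = 0) {j : ι}
    (hsurj : Function.Surjective (innerPi fun i : {i // i ≠ j} => v i)) {s : ι → ℝ}
    (hs : ∑ i, s i = 0) : ∃ x, innerPi v x = s := by
  classical
  obtain ⟨x, hx⟩ := hsurj fun i => s i
  have hne : ∀ i : {i // i ≠ j}, ⟪v i, x⟫ = s i := fun i => congrFun hx i
  refine ⟨x, funext fun i => ?_⟩
  rcases eq_or_ne i j with rfl | hi
  · have h : ∑ k, ⟪v k, x⟫ = 0 := by rw [← sum_inner, hsum, inner_zero_left]
    rw [Fintype.sum_eq_add_sum_subtype_ne _ i] at h hs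
    simp only [hne] at h
    simp only [innerPi_apply]
    linarith
  · exact hne ⟨i, hi⟩

theorem exists_abs_inner_sub_homothety_le {ι : Type*} [Fintype ι] {v : ι → E}
    (hι : 2 < Fintype.card ι) (hv0 : ∀ j, v j ≠ 0) (hsum : ∑ j, v j = 0)
    (hrange : ∀ s : ι → ℝ, ∑ j, s j = 0 → ∃ x, innerPi v x = s) {f : E → E}
    (hbdd : ∀ s, IsBounded s → IsBounded (f '' s)) {D : ℝ}
    (hlevel : ∀ j x y, ⟪v j, x⟫ = ⟪v j, y⟫ → |⟪v j, f x⟫ - ⟪v j, f y⟫| ≤ D) :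
    ∃ lam : ℝ, ∀ j x, |⟪v j, f x - (lam • x + f 0)⟫| ≤ (4 * Fintype.card ι + 1) * D := by
  set p : ι → ℝ → E := fun j t => (t / ‖v j‖ ^ 2) • v j
  have hp : ∀ j t, ⟪v j, p j t⟫ = t := fun j t => by
    simp [p, real_inner_smul_right, hv0]
  set F : ι → ℝ → ℝ := fun j t => ⟪v j, f (p j t) - f 0⟫
  have hsum_inner : ∀ y, ∑ j, ⟪v j, y⟫ = 0 := fun y => by
    rw [← sum_inner, hsum, inner_zero_left]
  have hF : ∀ s : ι → ℝ, ∑ j, s j = 0 → |∑ j, F j (s j)| ≤ Fintype.card ι * D := by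
    intro s hs
    obtain ⟨x, hx⟩ := hrange s hs
    have hsplit : ∑ j, F j (s j) = ∑ j, (⟪v j, f (p j (s j))⟫ - ⟪v j, f x⟫) := by
      simp only [F, inner_sub_right, Finset.sum_sub_distrib, hsum_inner]
    calc |∑ j, F j (s j)| ≤ ∑ j, |⟪v j, f (p j (s j))⟫ - ⟪v j, f x⟫| :=
          hsplit ▸ Finset.abs_sum_le_sum_abs _ _
      _ ≤ ∑ _j : ι, D := Finset.sum_le_sum fun j _ =>
          hlevel j _ _ (by rw [hp, ← hx, innerPi_apply])
      _ = Fintype.card ι * D := by simp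
  have hFbdd : ∀ j, IsBounded (F j '' Metric.ball 0 1) := by
    intro j
    have hpbdd : IsBounded (p j '' Metric.ball 0 1) :=
      ((isCompact_closedBall 0 1).image (by fun_prop)).isBounded.subset
        (Set.image_mono Metric.ball_subset_closedBall)
    have hlip := (innerSL ℝ (v j)).lipschitz.comp (IsometryEquiv.subRight (f 0)).isometry.lipschitz
    simpa [Set.image_image, F] using hlip.isBounded_image (hbdd _ hpbdd)
  obtain ⟨lam, hlam⟩ :=
    exists_abs_sub_mul_le_of_abs_sum_le hι F _ (fun j => by simp [F, p]) hFbdd hF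
  refine ⟨lam, fun j x => ?_⟩
  have h1 := hlevel j x (p j ⟪v j, x⟫) (hp j _).symm
  have h2 := hlam j ⟪v j, x⟫
  calc |⟪v j, f x - (lam • x + f 0)⟫|
      = |(⟪v j, f x⟫ - ⟪v j, f (p j ⟪v j, x⟫)⟫) + (F j ⟪v j, x⟫ - lam * ⟪v j, x⟫)| := by
        simp only [F, inner_sub_right, inner_add_right, real_inner_smul_right]; ring_nf
    _ ≤ D + 4 * (Fintype.card ι * D) := (abs_add_le _ _).trans (add_le_add h1 h2)
    _ = (4 * Fintype.card ι + 1) * D := by ring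

theorem exists_dist_homothety_le [FiniteDimensional ℝ E] {ι : Type*} [Fintype ι] {v : ι → E}
    (hE : 2 ≤ finrank ℝ E) (hcard : Fintype.card ι = finrank ℝ E + 1) (hv0 : ∀ j, v j ≠ 0)
    (hsum : ∑ j, v j = 0) (hgen : ∀ j, ⨅ (i) (_ : i ≠ j), (ℝ ∙ v i)ᗮ = ⊥) {D : ℝ}
    (hD : 0 ≤ D) :
    ∃ R' : ℝ, 0 ≤ R' ∧ ∀ f : E → E, (∀ s, IsBounded s → IsBounded (f '' s)) →
      (∀ j x y, ⟪v j, x⟫ = ⟪v j, y⟫ → |⟪v j, f x⟫ - ⟪v j, f y⟫| ≤ D) →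
      ∃ lam : ℝ, ∀ x, dist (f x) (lam • x + f 0) ≤ R' := by
  have hι : 2 < Fintype.card ι := by omega
  obtain ⟨j₀⟩ : Nonempty ι := Fintype.card_pos_iff.1 (by omega)
  have hinj : LinearMap.ker (innerPi v) = ⊥ := by
    rw [ker_innerPi, eq_bot_iff, ← hgen j₀]
    exact le_iInf₂ fun i _ => iInf_le _ i
  obtain ⟨A, -, hA⟩ := (innerPi v).exists_antilipschitzWith hinj
  refine ⟨A * ((4 * Fintype.card ι + 1) * D), by positivity, fun f hbdd hlevel => ?_⟩
  obtain ⟨lam, hlam⟩ := exists_abs_inner_sub_homothety_le hι hv0 hsum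
    (fun s hs => exists_innerPi_eq_of_sum_eq_zero hsum (surjective_innerPi_ne hcard (hgen j₀)) hs)
    hbdd hlevel
  refine ⟨lam, fun x => ?_⟩
  rw [dist_eq_norm]
  calc ‖f x - (lam • x + f 0)‖ ≤ A * ‖innerPi v (f x - (lam • x + f 0))‖ :=
        hA.le_mul_norm (map_zero _) _
    _ ≤ A * ((4 * Fintype.card ι + 1) * D) := by
        gcongr
        exact (pi_norm_le_iff_of_nonneg (by positivity)).2 fun j => by
          simpa using hlam j x

theorem abs_inner_sub_le_of_infEDist_le {u p : E} {s : Set E} {a R : ℝ} (hR : 0 ≤ R)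
    (hs : ∀ z ∈ s, ⟪u, z⟫ = a) (hp : infEDist p s ≤ ENNReal.ofReal R) :
    |⟪u, p⟫ - a| ≤ ‖u‖ * R := by
  have hlt : ∀ r, R < r → |⟪u, p⟫ - a| ≤ ‖u‖ * r := by
    intro r hr
    obtain ⟨z, hz, hpz⟩ := infEDist_lt_iff.1
      (hp.trans_lt ((ENNReal.ofReal_lt_ofReal_iff (hR.trans_lt hr)).2 hr))
    rw [← hs z hz, ← inner_sub_right]
    refine (abs_real_inner_le_norm _ _).trans ?_
    gcongr
    rw [← dist_eq_norm]
    exact (edist_lt_ofReal.1 hpz).le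
  have hcont : Tendsto (fun r => ‖u‖ * r) (𝓝[>] R) (𝓝 (‖u‖ * R)) :=
    ((continuous_const.mul continuous_id).tendsto R).mono_left nhdsWithin_le_nhds
  exact ge_of_tendsto hcont (eventually_nhdsWithin_of_forall hlt)

end InnerCoordinates

theorem mem_affTranslate_orthogonal_span_singleton {n : ℕ} {v w x : EuclideanSpace ℝ (Fin n)} :
    x ∈ affTranslate w (ℝ ∙ v)ᗮ ↔ ⟪v, x⟫ = ⟪v, w⟫ := by
  simp only [affTranslate, mem_image, SetLike.mem_coe,
    Submodule.mem_orthogonal_singleton_iff_inner_right]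
  constructor
  · rintro ⟨y, hy, rfl⟩
    rw [inner_add_right, hy, add_zero]
  · intro h
    exact ⟨x - w, by rw [inner_sub_right, h, sub_self], add_sub_cancel w x⟩

theorem abs_inner_sub_le_of_hausdorffEDist_le {n : ℕ} {v : EuclideanSpace ℝ (Fin n)}
    {f : EuclideanSpace ℝ (Fin n) → EuclideanSpace ℝ (Fin n)} {R : ℝ} (hR : 0 ≤ R)
    (hf : ∀ p, ∃ w, hausdorffEDist (f '' affTranslate p (ℝ ∙ v)ᗮ) (affTranslate w (ℝ ∙ v)ᗮ) ≤
      ENNReal.ofReal R) {x y : EuclideanSpace ℝ (Fin n)} (hxy : ⟪v, x⟫ = ⟪v, y⟫) :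
    |⟪v, f x⟫ - ⟪v, f y⟫| ≤ 2 * ‖v‖ * R := by
  obtain ⟨w, hw⟩ := hf x
  have hnear : ∀ z, ⟪v, z⟫ = ⟪v, x⟫ → |⟪v, f z⟫ - ⟪v, w⟫| ≤ ‖v‖ * R := fun z hz =>
    abs_inner_sub_le_of_infEDist_le hR (fun _ h => mem_affTranslate_orthogonal_span_singleton.1 h)
      ((infEDist_le_hausdorffEDist_of_mem (mem_image_of_mem f
        (mem_affTranslate_orthogonal_span_singleton.2 hz))).trans hw)
  have hx := hnear x rfl
  have hy := hnear y hxy.symm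
  rw [abs_le] at hx hy ⊢
  constructor <;> linarith

theorem hyperplanes_in_general_position_rigid_general
    (n : ℕ) (hn : 2 ≤ n)
    (H : Fin (n + 1) → Submodule ℝ (EuclideanSpace ℝ (Fin n)))
    (hdim : ∀ j, Module.finrank ℝ (H j) = n - 1)
    (hgen : ∀ j : Fin (n + 1), (⨅ (i) (_ : i ≠ j), H i) = ⊥)
    (K C R : ℝ) (hK : 1 ≤ K) (hR : 0 ≤ R) :
    ∃ R' : ℝ, 0 ≤ R' ∧
      ∀ f : EuclideanSpace ℝ (Fin n) → EuclideanSpace ℝ (Fin n),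
        IsQI K C f →
        (∀ (j : Fin (n + 1)) (v : EuclideanSpace ℝ (Fin n)),
          ∃ w : EuclideanSpace ℝ (Fin n),
            EMetric.hausdorffEdist (f '' affTranslate v (H j)) (affTranslate w (H j)) ≤
              ENNReal.ofReal R) →
        ∃ (lam : ℝ) (b : EuclideanSpace ℝ (Fin n)), lam ≠ 0 ∧
          ∀ x, dist (f x) (lam • x + b) ≤ R' := by
  have hE : finrank ℝ (EuclideanSpace ℝ (Fin n)) = n := finrank_euclideanSpace_fin
  obtain ⟨v, hv0, rfl, hsum⟩ := exists_sum_eq_zero_and_eq_orthogonal_span_singleton H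
    (fun j => by rw [hdim j, hE]; omega) (by simp [hE]) hgen
  obtain ⟨R', hR', hnear⟩ := exists_dist_homothety_le (by omega) (by simp [hE]) hv0 hsum hgen
    (D := 2 * (∑ j, ‖v j‖) * R) (by positivity)
  refine ⟨R', hR', fun f hf hplanes => ?_⟩
  obtain ⟨lam, hlam⟩ := hnear f (fun s hs => hf.1.isBounded_image hs) fun j x y hxy =>
    (abs_inner_sub_le_of_hausdorffEDist_le hR (hplanes j) hxy).trans <| by
      gcongr
      exact Finset.single_le_sum (fun i _ => norm_nonneg (v i)) (Finset.mem_univ j)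
  refine ⟨lam, f 0, fun hlam0 => ?_, hlam⟩
  have : NeZero n := ⟨by omega⟩
  have hbdd : IsBounded (f '' univ) := isBounded_closedBall.subset <| by
    rintro _ ⟨x, -, rfl⟩
    simpa [hlam0] using hlam x
  exact NormedSpace.unbounded_univ ℝ _ (hf.1.isBounded_of_isBounded_image (by linarith) hbdd)

/-- **Rigidity of `n+1` hyperplanes in general position.**
Let `n ≥ 2` and let `H₀, …, Hₙ` be `n+1` linear hyperplanes of `ℝⁿ` in general position
(the intersection of any `n` of them is `{0}`).  For all `K ≥ 1`, `C ≥ 0`, `R ≥ 0` there is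
`R' ≥ 0` such that any `(K,C)`-quasi-isometry `f : ℝⁿ → ℝⁿ` sending each affine subspace
parallel to some `Hⱼ` within Hausdorff distance `R` of an affine subspace parallel to the
same `Hⱼ` is within distance `R'` of an affine homothety `x ↦ λ·x + b` with `λ ≠ 0`. -/
theorem hyperplanes_in_general_position_rigid
    (n : ℕ) (hn : 2 ≤ n)
    (H : Fin (n + 1) → Submodule ℝ (EuclideanSpace ℝ (Fin n)))
    (hdim : ∀ j, Module.finrank ℝ (H j) = n - 1)
    (hgen : ∀ j : Fin (n + 1), (⨅ (i) (_ : i ≠ j), H i) = ⊥)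
    (K C R : ℝ) (hK : 1 ≤ K) (hC : 0 ≤ C) (hR : 0 ≤ R) :
    ∃ R' : ℝ, 0 ≤ R' ∧
      ∀ f : EuclideanSpace ℝ (Fin n) → EuclideanSpace ℝ (Fin n),
        IsQI K C f →
        (∀ (j : Fin (n + 1)) (v : EuclideanSpace ℝ (Fin n)),
          ∃ w : EuclideanSpace ℝ (Fin n),
            EMetric.hausdorffEdist (f '' affTranslate v (H j)) (affTranslate w (H j)) ≤
              ENNReal.ofReal R) →
        ∃ (lam : ℝ) (b : EuclideanSpace ℝ (Fin n)), lam ≠ 0 ∧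
          ∀ x, dist (f x) (lam • x + b) ≤ R' :=
  hyperplanes_in_general_position_rigid_general n hn H hdim hgen K C R hK hR
end

section
/- Let F and F' be finite collections of linear subspaces of ℝⁿ, and suppose F is rigid. Let f : ℝⁿ → ℝⁿ be a quasi-isometry that sends the affine pattern P_F to the affine pattern P_{F'}: there exists C₀ ≥ 0 such that for every A ∈ P_F there is B ∈ P_{F'} with the Hausdorff distance between f(A) and B at most C₀, and for every B ∈ P_{F'} there is A ∈ P_F with the Hausdorff distance between f(A) and B at most C₀. Then f is at bounded distance from an invertible affine map: there exist M ∈ GLₙ(ℝ), b ∈ ℝⁿ and C₁ ≥ 0 such that ‖f(x) − (M·x + b)‖ ≤ C₁ for all x ∈ ℝⁿ. Moreover, up to composition with affine homotheties there are only finitely many such affine maps: the set of linear parts M arising in this way, over all quasi-isometries of ℝⁿ sending P_F to P_{F'}, is contained in finitely many equivalence classes under multiplication by nonzero real scalars. -/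
/-- The affine pattern `P_F` induced by a collection `F` of linear subspaces of `ℝⁿ`:
all affine subspaces parallel to some member of `F`. -/
def affPattern {n : ℕ} (F : Set (Submodule ℝ (EuclideanSpace ℝ (Fin n)))) :
    Set (Set (EuclideanSpace ℝ (Fin n))) :=
  {A | ∃ v : EuclideanSpace ℝ (Fin n), ∃ V ∈ F, A = affTranslate v V}

/-- `g` coarsely respects, with constant `R`, each foliation by affine subspaces parallel
to members of `F`. -/
def RespectsParallelPatterns {n : ℕ} (R : ℝ) (g : EuclideanSpace ℝ (Fin n) → EuclideanSpace ℝ (Fin n))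
    (F : Set (Submodule ℝ (EuclideanSpace ℝ (Fin n)))) : Prop :=
  ∀ V ∈ F, ∀ v : EuclideanSpace ℝ (Fin n), ∃ w : EuclideanSpace ℝ (Fin n),
    EMetric.hausdorffEdist (g '' affTranslate v V) (affTranslate w V) ≤ ENNReal.ofReal R

/-- A collection `F` of linear subspaces of `ℝⁿ` is rigid: every quasi-isometry coarsely
respecting each affine foliation parallel to a member of `F` is uniformly close to an
affine homothety. -/
def RigidCollection {n : ℕ} (F : Set (Submodule ℝ (EuclideanSpace ℝ (Fin n)))) : Prop :=
  ∀ K C R : ℝ, 1 ≤ K → 0 ≤ C → 0 ≤ R → ∃ R' : ℝ, 0 ≤ R' ∧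
    ∀ g : EuclideanSpace ℝ (Fin n) → EuclideanSpace ℝ (Fin n),
      IsQI K C g → RespectsParallelPatterns R g F →
        ∃ (lam : ℝ) (b : EuclideanSpace ℝ (Fin n)), lam ≠ 0 ∧
          ∀ x, dist (g x) (lam • x + b) ≤ R'

/-- `f` sends the affine pattern `P_F` to the affine pattern `P_{F'}`, with constant `C₀`. -/
def SendsPattern {n : ℕ} (f : EuclideanSpace ℝ (Fin n) → EuclideanSpace ℝ (Fin n))
    (F F' : Set (Submodule ℝ (EuclideanSpace ℝ (Fin n)))) (C₀ : ℝ) : Prop :=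
  (∀ A ∈ affPattern F, ∃ B ∈ affPattern F',
    EMetric.hausdorffEdist (f '' A) B ≤ ENNReal.ofReal C₀) ∧
  (∀ B ∈ affPattern F', ∃ A ∈ affPattern F,
    EMetric.hausdorffEdist (f '' A) B ≤ ENNReal.ofReal C₀)

/-!
Conjugating the translation by `t` through `f` and a quasi-inverse `g` gives quasi-isometries
`x ↦ g (f x + t)` with constants independent of `t`, which send `P_F` to itself and stay at
bounded distance from the identity. Rigidity makes each of them a translation by some `β t` up to
a uniform error, so `f (x + β t)` is uniformly close to `f x + t`. Then `β` is additive up to a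
bounded error, hence (Hyers) uniformly close to an additive map `A`, which is bounded near `0`,
hence linear, and injective; `f` is close to `x ↦ A⁻¹ x + f 0`.

A linear part `M` of such an approximation maps each member of `F` onto a member of `F'`. If two
of them, `M₁` and `M₂`, induce the same map `F → F'`, then `M₂⁻¹ M₁` fixes every member of `F`,
and rigidity forces it to be a homothety. There are only finitely many maps `F → F'`.
-/

open Metric Set Function

theorem Set.Finite.exists_finset_forall_exists_eq {α β : Type*} [Nonempty α] {S : Set α}
    {Φ : α → β} (h : (Φ '' S).Finite) :
    ∃ s : Finset α, (∀ a ∈ s, a ∈ S) ∧ ∀ a ∈ S, ∃ a₀ ∈ s, Φ a₀ = Φ a := by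
  classical
  refine ⟨h.toFinset.image (invFunOn Φ S), fun a ha => ?_, fun a ha => ?_⟩
  · obtain ⟨_, hb, rfl⟩ := Finset.mem_image.1 ha
    exact invFunOn_mem ((h.mem_toFinset).1 hb)
  · exact ⟨_, Finset.mem_image_of_mem _ (h.mem_toFinset.2 (mem_image_of_mem Φ ha)),
      invFunOn_eq ⟨a, ha, rfl⟩⟩

section HausdorffWithin

variable {X Y : Type*} [PseudoMetricSpace X] [PseudoMetricSpace Y]

-- A real-valued `hausdorffEDist s t ≤ r` with attained witnesses, so that constants simply add.
def HausdorffWithin (r : ℝ) (s t : Set X) : Prop :=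
  (∀ x ∈ s, ∃ y ∈ t, dist x y ≤ r) ∧ ∀ y ∈ t, ∃ x ∈ s, dist x y ≤ r

theorem hausdorffWithin_image_image_of_dist_le {α : Type*} {s : Set α} {r : ℝ} {g g' : α → Y}
    (h : ∀ x ∈ s, dist (g x) (g' x) ≤ r) : HausdorffWithin r (g '' s) (g' '' s) := by
  refine ⟨?_, ?_⟩
  · rintro _ ⟨x, hx, rfl⟩
    exact ⟨g' x, mem_image_of_mem g' hx, h x hx⟩
  · rintro _ ⟨x, hx, rfl⟩
    exact ⟨g x, mem_image_of_mem g hx, h x hx⟩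

variable {r r' : ℝ} {s t u : Set X}

theorem HausdorffWithin.symm (h : HausdorffWithin r s t) : HausdorffWithin r t s := by
  refine ⟨fun y hy => ?_, fun x hx => ?_⟩
  · obtain ⟨x, hx, hd⟩ := h.2 y hy
    exact ⟨x, hx, by rwa [dist_comm]⟩
  · obtain ⟨y, hy, hd⟩ := h.1 x hx
    exact ⟨y, hy, by rwa [dist_comm]⟩

theorem HausdorffWithin.trans (h : HausdorffWithin r s t) (h' : HausdorffWithin r' t u) :
    HausdorffWithin (r + r') s u := by
  refine ⟨fun x hx => ?_, fun z hz => ?_⟩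
  · obtain ⟨y, hy, hxy⟩ := h.1 x hx
    obtain ⟨z, hz, hyz⟩ := h'.1 y hy
    exact ⟨z, hz, (dist_triangle x y z).trans (add_le_add hxy hyz)⟩
  · obtain ⟨y, hy, hyz⟩ := h'.2 z hz
    obtain ⟨x, hx, hxy⟩ := h.2 y hy
    exact ⟨x, hx, (dist_triangle x y z).trans (add_le_add hxy hyz)⟩

theorem HausdorffWithin.image {g : X → Y} {K C : ℝ} (hK : 0 ≤ K)
    (hg : ∀ x y, dist (g x) (g y) ≤ K * dist x y + C) (h : HausdorffWithin r s t) :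
    HausdorffWithin (K * r + C) (g '' s) (g '' t) := by
  refine ⟨?_, ?_⟩
  · rintro _ ⟨x, hx, rfl⟩
    obtain ⟨y, hy, hxy⟩ := h.1 x hx
    exact ⟨g y, mem_image_of_mem g hy, (hg x y).trans (by gcongr)⟩
  · rintro _ ⟨y, hy, rfl⟩
    obtain ⟨x, hx, hxy⟩ := h.2 y hy
    exact ⟨g x, mem_image_of_mem g hx, (hg x y).trans (by gcongr)⟩

theorem HausdorffWithin.hausdorffEDist_le (h : HausdorffWithin r s t) :
    hausdorffEDist s t ≤ ENNReal.ofReal r := by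
  refine hausdorffEDist_le_of_mem_edist (fun x hx => ?_) (fun y hy => ?_)
  · obtain ⟨y, hy, hd⟩ := h.1 x hx
    exact ⟨y, hy, edist_dist x y ▸ ENNReal.ofReal_le_ofReal hd⟩
  · obtain ⟨x, hx, hd⟩ := h.2 y hy
    exact ⟨x, hx, edist_dist y x ▸ ENNReal.ofReal_le_ofReal (dist_comm y x ▸ hd)⟩

theorem hausdorffWithin_of_hausdorffEDist_le (hr : 0 ≤ r)
    (h : hausdorffEDist s t ≤ ENNReal.ofReal r) : HausdorffWithin (r + 1) s t := by
  have hlt : hausdorffEDist s t < ENNReal.ofReal (r + 1) :=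
    h.trans_lt ((ENNReal.ofReal_lt_ofReal_iff (by linarith)).2 (lt_add_one r))
  refine ⟨fun x hx => ?_, fun y hy => ?_⟩
  · obtain ⟨y, hy, hd⟩ := exists_edist_lt_of_hausdorffEDist_lt hx hlt
    exact ⟨y, hy, (edist_lt_ofReal.1 hd).le⟩
  · rw [hausdorffEDist_comm] at hlt
    obtain ⟨x, hx, hd⟩ := exists_edist_lt_of_hausdorffEDist_lt hy hlt
    exact ⟨x, hx, dist_comm x y ▸ (edist_lt_ofReal.1 hd).le⟩

end HausdorffWithin

section QuasiIsometry

variable {X Y Z : Type*} [MetricSpace X] [MetricSpace Y] [MetricSpace Z] {K C K' C' : ℝ}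

theorem IsQIEmbedding.dist_le {f : X → Y} (hK : 0 < K) (hf : IsQIEmbedding K C f) (x y : X) :
    dist x y ≤ K * dist (f x) (f y) + K * C := by
  have h := (hf x y).1
  rw [one_div, sub_le_iff_le_add, inv_mul_le_iff₀ hK] at h
  linarith

theorem IsQI.comp {f : X → Y} {g : Y → Z} (hg : IsQI K' C' g) (hf : IsQI K C f) (hK' : 1 ≤ K')
    (hC : 0 ≤ C) (hC' : 0 ≤ C') : IsQI (K' * K) (K' * C + 2 * C') (g ∘ f) := by
  have hCK' : 1 / K' * C ≤ K' * C := by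
    have : 1 / K' ≤ K' := (div_le_one (by linarith)).2 hK' |>.trans hK'
    gcongr
  refine ⟨fun x y => ⟨?_, ?_⟩, fun z => ?_⟩
  · calc 1 / (K' * K) * dist x y - (K' * C + 2 * C')
        ≤ 1 / K' * (1 / K * dist x y - C) - C' := by
          rw [← one_div_mul_one_div, mul_assoc, mul_sub]
          linarith
      _ ≤ 1 / K' * dist (f x) (f y) - C' := by
          gcongr
          exact (hf.1 x y).1
      _ ≤ dist ((g ∘ f) x) ((g ∘ f) y) := (hg.1 (f x) (f y)).1
  · calc dist ((g ∘ f) x) ((g ∘ f) y) ≤ K' * dist (f x) (f y) + C' := (hg.1 (f x) (f y)).2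
      _ ≤ K' * (K * dist x y + C) + C' := by
          gcongr
          exact (hf.1 x y).2
      _ ≤ K' * K * dist x y + (K' * C + 2 * C') := by linarith
  · obtain ⟨y, hy⟩ := hg.2 z
    obtain ⟨x, hx⟩ := hf.2 y
    refine ⟨x, ?_⟩
    calc dist ((g ∘ f) x) z ≤ dist (g (f x)) (g y) + dist (g y) z := dist_triangle _ _ _
      _ ≤ (K' * dist (f x) y + C') + C' := add_le_add (hg.1 _ _).2 hy
      _ ≤ K' * C + 2 * C' := by nlinarith

theorem IsQI.add_const {E : Type*} [NormedAddCommGroup E] {f : X → E} (hf : IsQI K C f) (t : E) :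
    IsQI K C (fun x => f x + t) := by
  refine ⟨fun x y => by simpa only [dist_add_right] using hf.1 x y, fun z => ?_⟩
  obtain ⟨x, hx⟩ := hf.2 (z - t)
  exact ⟨x, by rwa [← dist_add_right _ _ t, sub_add_cancel] at hx⟩

theorem IsQI.exists_quasiInverse {f : X → Y} (hK : 1 ≤ K) (hC : 0 ≤ C) (hf : IsQI K C f) :
    ∃ g : Y → X, IsQI K (3 * K * C) g ∧ (∀ y, dist (f (g y)) y ≤ C) ∧
      ∀ x, dist (g (f x)) x ≤ 2 * K * C := by
  choose g hg using hf.2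
  have hK0 : 0 < K := by linarith
  have hfg : ∀ p q, dist p q ≤ dist (f (g p)) (f (g q)) + 2 * C := fun p q => by
    linarith [dist_triangle4 p (f (g p)) (f (g q)) q, hg p, hg q, dist_comm p (f (g p))]
  have hfg' : ∀ p q, dist (f (g p)) (f (g q)) ≤ dist p q + 2 * C := fun p q => by
    linarith [dist_triangle4 (f (g p)) p q (f (g q)), hg p, hg q, dist_comm q (f (g q))]
  have hgf : ∀ x, dist (g (f x)) x ≤ 2 * K * C := fun x => by
    nlinarith [hf.1.dist_le hK0 (g (f x)) x, hg (f x)]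
  refine ⟨g, ⟨fun p q => ⟨?_, ?_⟩, fun x => ⟨f x, (hgf x).trans (by nlinarith)⟩⟩, hg, hgf⟩
  · have h := (hf.1 (g p) (g q)).2
    rw [one_div, sub_le_iff_le_add, inv_mul_le_iff₀ hK0]
    nlinarith [hfg p q, mul_nonneg (mul_nonneg (sub_nonneg.2 hK) (by linarith : 0 ≤ K + 1)) hC]
  · nlinarith [hf.1.dist_le hK0 (g p) (g q), mul_le_mul_of_nonneg_left (hfg' p q) hK0.le]

theorem IsQIEmbedding.norm_sub_le_of_dist_add_le {E : Type*} [NormedAddCommGroup E]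
    {f β : E → E} {E₀ : ℝ} (hK : 0 < K) (hf : IsQIEmbedding K C f)
    (hβ : ∀ t x, dist (f (x + β t)) (f x + t) ≤ E₀) (s t : E) :
    ‖β (s + t) - β s - β t‖ ≤ K * (3 * E₀) + K * C := by
  have h₁ : dist (f 0 + (s + t)) (f (β s) + t) ≤ E₀ := by
    rw [← add_assoc, dist_add_right, dist_comm]
    simpa using hβ s 0
  rw [sub_sub, ← dist_eq_norm]
  calc dist (β (s + t)) (β s + β t) ≤ K * dist (f (β (s + t))) (f (β s + β t)) + K * C :=
        hf.dist_le hK _ _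
    _ ≤ K * (3 * E₀) + K * C := by
        gcongr
        calc dist (f (β (s + t))) (f (β s + β t))
            ≤ dist (f (β (s + t))) (f 0 + (s + t)) + dist (f 0 + (s + t)) (f (β s) + t) +
              dist (f (β s) + t) (f (β s + β t)) := dist_triangle4 _ _ _ _
          _ ≤ E₀ + E₀ + E₀ := by
              gcongr
              · simpa using hβ (s + t) 0
              · rw [dist_comm]
                exact hβ t (β s)
          _ = 3 * E₀ := by ring

theorem LinearEquiv.exists_isQI {E F : Type*} [NormedAddCommGroup E] [NormedSpace ℝ E]
    [FiniteDimensional ℝ E] [NormedAddCommGroup F] [NormedSpace ℝ F] [FiniteDimensional ℝ F]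
    (L : E ≃ₗ[ℝ] F) : ∃ K, 1 ≤ K ∧ IsQI K 0 L := by
  set Lc := L.toContinuousLinearEquiv
  set K := max ‖(Lc : E →L[ℝ] F)‖ ‖(Lc.symm : F →L[ℝ] E)‖ + 1
  have hLc : ‖(Lc : E →L[ℝ] F)‖ ≤ K :=
    (le_max_left _ _).trans (le_add_of_nonneg_right zero_le_one)
  have hLc' : ‖(Lc.symm : F →L[ℝ] E)‖ ≤ K :=
    (le_max_right _ _).trans (le_add_of_nonneg_right zero_le_one)
  have hK : 1 ≤ K := le_add_of_nonneg_left ((norm_nonneg _).trans (le_max_left _ _))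
  refine ⟨K, hK, fun x y => ⟨?_, ?_⟩, fun y => ⟨L.symm y, by simp⟩⟩
  · rw [sub_zero, one_div, inv_mul_le_iff₀ (by linarith)]
    calc dist x y = dist (Lc.symm (L x)) (Lc.symm (L y)) := by simp [Lc]
      _ ≤ ‖(Lc.symm : F →L[ℝ] E)‖ * dist (L x) (L y) :=
          (Lc.symm : F →L[ℝ] E).lipschitz.dist_le_mul _ _
      _ ≤ K * dist (L x) (L y) := by gcongr
  · rw [add_zero]
    calc dist (L x) (L y) ≤ ‖(Lc : E →L[ℝ] F)‖ * dist x y :=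
          (Lc : E →L[ℝ] F).lipschitz.dist_le_mul x y
      _ ≤ K * dist x y := by gcongr

end QuasiIsometry

section NormedSpace

open Filter Topology

variable {E F : Type*} [NormedAddCommGroup E] [NormedSpace ℝ E] [NormedAddCommGroup F]
  [NormedSpace ℝ F]

theorem eq_zero_of_forall_norm_smul_le {x : E} {B : ℝ} (h : ∀ c : ℝ, ‖c • x‖ ≤ B) :
    x = 0 := by
  by_contra hx
  have hx' : 0 < ‖x‖ := norm_pos_iff.2 hx
  have hB : 0 ≤ B := by simpa using h 0
  have := h ((B + 1) / ‖x‖)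
  rw [norm_smul, Real.norm_of_nonneg (by positivity), div_mul_cancel₀ _ hx'.ne'] at this
  linarith

theorem LinearMap.eq_of_forall_dist_le (T S : E →ₗ[ℝ] F) {b : F} {R : ℝ}
    (h : ∀ x, dist (T x) (S x + b) ≤ R) : T = S := by
  refine LinearMap.ext fun x => sub_eq_zero.1 <|
    eq_zero_of_forall_norm_smul_le (B := R + ‖b‖) fun c => ?_
  calc ‖c • (T x - S x)‖ = ‖(T (c • x) - (S (c • x) + b)) + b‖ := by
        rw [map_smul, map_smul, smul_sub]; abel_nf
    _ ≤ R + ‖b‖ := (norm_add_le _ _).trans (by rw [← dist_eq_norm]; gcongr; exact h _)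

theorem exists_addMonoidHom_norm_sub_le {G : Type*} [AddCommMonoid G] [CompleteSpace F]
    {β : G → F} {D : ℝ} (hβ : ∀ s t, ‖β (s + t) - β s - β t‖ ≤ D) :
    ∃ A : G →+ F, ∀ t, ‖β t - A t‖ ≤ D := by
  set u : G → ℕ → F := fun t k => ((2 : ℝ) ^ k)⁻¹ • β (2 ^ k • t)
  have hstep : ∀ t k, dist (u t k) (u t (k + 1)) ≤ D / 2 * (1 / 2) ^ k := fun t k => by
    have hs : 2 ^ (k + 1) • t = 2 ^ k • t + 2 ^ k • t := by
      rw [pow_succ, mul_nsmul, two_nsmul]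
    have : u t k - u t (k + 1) = -((2 : ℝ) ^ (k + 1))⁻¹ •
        (β (2 ^ k • t + 2 ^ k • t) - β (2 ^ k • t) - β (2 ^ k • t)) := by
      simp only [u]
      rw [hs, pow_succ, mul_inv]
      module
    rw [dist_eq_norm, this, norm_smul, norm_neg, Real.norm_of_nonneg (by positivity)]
    calc ((2 : ℝ) ^ (k + 1))⁻¹ * _ ≤ ((2 : ℝ) ^ (k + 1))⁻¹ * D := by
          gcongr
          exact hβ _ _
      _ = D / 2 * (1 / 2) ^ k := by rw [pow_succ, one_div_pow]; ring
  have hlim : ∀ t, ∃ a, Tendsto (u t) atTop (𝓝 a) := fun t =>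
    cauchySeq_tendsto_of_complete (cauchySeq_of_le_geometric _ _ (by norm_num) (hstep t))
  choose A hA using hlim
  have hadd : ∀ s t, A (s + t) = A s + A t := fun s t => by
    have hdefect : Tendsto (fun k => u (s + t) k - u s k - u t k) atTop (𝓝 0) := by
      refine squeeze_zero_norm (fun k => ?_) (by simpa using (tendsto_pow_atTop_nhds_zero_of_lt_one
        (by norm_num : (0 : ℝ) ≤ 1 / 2) (by norm_num)).const_mul D)
      rw [show u (s + t) k - u s k - u t k = ((2 : ℝ) ^ k)⁻¹ •
          (β (2 ^ k • s + 2 ^ k • t) - β (2 ^ k • s) - β (2 ^ k • t)) by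
        simp only [u, nsmul_add, smul_sub], norm_smul, Real.norm_of_nonneg (by positivity),
        mul_comm D]
      gcongr
      exact hβ _ _
    have h := tendsto_nhds_unique (((hA (s + t)).sub (hA s)).sub (hA t)) hdefect
    rwa [sub_sub, sub_eq_zero] at h
  refine ⟨AddMonoidHom.mk' A hadd, fun t => ?_⟩
  have h := dist_le_of_le_geometric_of_tendsto₀ _ _ (by norm_num) (hstep t) (hA t)
  rw [← dist_eq_norm]
  calc dist (β t) (A t) = dist (u t 0) (A t) := by simp [u]
    _ ≤ D / 2 / (1 - 1 / 2) := h
    _ = D := by ring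

theorem IsQIEmbedding.exists_bijective_linearMap_of_dist_le [FiniteDimensional ℝ E] {f : E → E}
    {K C C₁ : ℝ} (hK : 0 < K) (hf : IsQIEmbedding K C f) (A : E →+ E)
    (hA : ∀ t, dist (f (A t)) (f 0 + t) ≤ C₁) :
    ∃ M : E →ₗ[ℝ] E, Bijective M ∧ ∀ x, dist (f x) (M x + f 0) ≤ C₁ := by
  have hcont : Continuous A := by
    refine A.continuous_of_isBounded_nhds_zero (ball_mem_nhds 0 one_pos)
      (isBounded_iff_forall_norm_le.2 ⟨K * (C₁ + 1) + K * C, ?_⟩)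
    rintro _ ⟨t, ht, rfl⟩
    calc ‖A t‖ = dist (A t) (A 0) := by rw [map_zero, dist_zero_right]
      _ ≤ K * dist (f (A t)) (f (A 0)) + K * C := hf.dist_le hK _ _
      _ ≤ K * (C₁ + 1) + K * C := by
          gcongr
          rw [map_zero]
          linarith [dist_triangle (f (A t)) (f 0 + t) (f 0), hA t,
            show dist (f 0 + t) (f 0) < 1 by simpa using ht]
  set L := (A.toRealLinearMap hcont).toLinearMap
  have hinj : Injective L := by
    refine (injective_iff_map_eq_zero L).2 fun t ht =>
      eq_zero_of_forall_norm_smul_le (B := C₁) fun c => ?_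
    have h := hA (c • t)
    rwa [show A (c • t) = 0 from (L.map_smul c t).trans (by rw [ht, smul_zero]),
      dist_self_add_right] at h
  set e := LinearEquiv.ofBijective L ⟨hinj, LinearMap.injective_iff_surjective.1 hinj⟩
  refine ⟨e.symm.toLinearMap, e.symm.bijective, fun x => ?_⟩
  have h := hA (e.symm x)
  rwa [show A (e.symm x) = x from e.apply_symm_apply x, add_comm] at h

theorem IsQIEmbedding.exists_bijective_linearMap_of_dist_add_le [FiniteDimensional ℝ E]
    {f β : E → E} {K C E₀ : ℝ} (hK : 0 < K) (hf : IsQIEmbedding K C f)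
    (hβ : ∀ t x, dist (f (x + β t)) (f x + t) ≤ E₀) :
    ∃ (M : E →ₗ[ℝ] E) (C₁ : ℝ), Bijective M ∧ ∀ x, dist (f x) (M x + f 0) ≤ C₁ := by
  obtain ⟨A, hA⟩ := exists_addMonoidHom_norm_sub_le (hf.norm_sub_le_of_dist_add_le hK hβ)
  obtain ⟨M, hM, hfM⟩ := hf.exists_bijective_linearMap_of_dist_le hK A
    (C₁ := K * (K * (3 * E₀) + K * C) + C + E₀) fun t => by
      have h := (hf (A t) (β t)).2
      rw [dist_comm (A t), dist_eq_norm (β t)] at h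
      have := mul_le_mul_of_nonneg_left (hA t) hK.le
      linarith [dist_triangle (f (A t)) (f (β t)) (f 0 + t),
        show dist (f (β t)) (f 0 + t) ≤ E₀ by simpa using hβ t 0]
  exact ⟨M, _, hM, hfM⟩

end NormedSpace

section Pattern

variable {n : ℕ}

local notation "E" => EuclideanSpace ℝ (Fin n)

theorem image_add_const_affTranslate (t v : E) (V : Submodule ℝ E) :
    (· + t) '' affTranslate v V = affTranslate (v + t) V := by
  simp only [affTranslate, image_image]
  exact image_congr fun x _ => add_right_comm v x t

theorem image_affTranslate_zero (M : E →ₗ[ℝ] E) (b : E) (V : Submodule ℝ E) :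
    (fun x => M x + b) '' affTranslate 0 V = affTranslate b (V.map M) := by
  simp only [affTranslate, zero_add, image_id', Submodule.map_coe, image_image]
  exact image_congr fun x _ => add_comm (M x) b

theorem LinearMap.image_affTranslate (L : E →ₗ[ℝ] E) (v : E) (V : Submodule ℝ E) :
    L '' affTranslate v V = affTranslate (L v) (V.map L) := by
  simp only [affTranslate, Submodule.map_coe, image_image, map_add]

theorem le_of_forall_mem_affTranslate_exists_dist_le {U W : Submodule ℝ E} {u w : E} {r : ℝ}
    (h : ∀ x ∈ affTranslate u U, ∃ y ∈ affTranslate w W, dist x y ≤ r) : U ≤ W := by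
  set P := Wᗮ.starProjection
  have hker : ∀ z, P z = 0 ↔ z ∈ W := fun z => by
    rw [← Submodule.orthogonal_orthogonal W, ← Submodule.ker_starProjection]
    exact LinearMap.mem_ker.symm
  intro x hx
  -- `P` kills `W`, so it maps the whole line `u + ℝ x` into the `r`-ball around `P w`
  have hbound : ∀ c : ℝ, ‖c • P x‖ ≤ r + ‖P (u - w)‖ := fun c => by
    obtain ⟨_, ⟨z, hz, rfl⟩, hd⟩ := h (u + c • x) ⟨c • x, U.smul_mem c hx, rfl⟩
    calc ‖c • P x‖ = ‖P (u + c • x - (w + z)) - P (u - w)‖ := by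
          simp only [map_sub, map_add, map_smul, (hker z).2 hz]; abel_nf
      _ ≤ ‖P (u + c • x - (w + z))‖ + ‖P (u - w)‖ := norm_sub_le _ _
      _ ≤ r + ‖P (u - w)‖ := by
          gcongr
          exact (Submodule.norm_starProjection_apply_le _ _).trans (by rwa [← dist_eq_norm])
  exact (hker x).1 (eq_zero_of_forall_norm_smul_le hbound)

theorem HausdorffWithin.eq_of_affTranslate {U W : Submodule ℝ E} {u w : E} {r : ℝ}
    (h : HausdorffWithin r (affTranslate u U) (affTranslate w W)) : U = W :=
  le_antisymm (le_of_forall_mem_affTranslate_exists_dist_le h.1)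
    (le_of_forall_mem_affTranslate_exists_dist_le h.symm.1)

variable {F F' F'' : Set (Submodule ℝ (EuclideanSpace ℝ (Fin n)))}

theorem SendsPattern.add_const {f : E → E} {C₀ : ℝ} (hf : SendsPattern f F F' C₀) (t : E) :
    SendsPattern (fun x => f x + t) F F' C₀ := by
  have htranslate : ∀ A B : Set E, hausdorffEDist (f '' A) B ≤ ENNReal.ofReal C₀ →
      hausdorffEDist ((fun x => f x + t) '' A) ((· + t) '' B) ≤ ENNReal.ofReal C₀ := by
    intro A B h
    rwa [← image_image (· + t) f, hausdorffEDist_image (isometry_add_right t)]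
  refine ⟨?_, ?_⟩
  · rintro A hA
    obtain ⟨_, ⟨w, W, hW, rfl⟩, hB⟩ := hf.1 A hA
    exact ⟨_, ⟨w + t, W, hW, image_add_const_affTranslate t w W⟩, htranslate _ _ hB⟩
  · rintro _ ⟨w, W, hW, rfl⟩
    obtain ⟨A, hA, hB⟩ := hf.2 _ ⟨w - t, W, hW, rfl⟩
    have h := htranslate _ _ hB
    rw [image_add_const_affTranslate, sub_add_cancel] at h
    exact ⟨A, hA, h⟩

theorem SendsPattern.of_quasiInverse {f g : E → E} {C₀ K C ρ : ℝ}
    (hf : SendsPattern f F F' C₀) (hC₀ : 0 ≤ C₀) (hK : 0 ≤ K)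
    (hg : ∀ x y, dist (g x) (g y) ≤ K * dist x y + C)
    (hgf : ∀ x, dist (g (f x)) x ≤ ρ) : SendsPattern g F' F (K * (C₀ + 1) + C + ρ) := by
  have hback : ∀ A B : Set E, hausdorffEDist (f '' A) B ≤ ENNReal.ofReal C₀ →
      hausdorffEDist (g '' B) A ≤ ENNReal.ofReal (K * (C₀ + 1) + C + ρ) := by
    intro A B h
    have hgfA : HausdorffWithin ρ (g '' (f '' A)) A := by
      rw [image_image]
      simpa only [image_id'] using
        hausdorffWithin_image_image_of_dist_le fun x (_ : x ∈ A) => hgf x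
    exact (((hausdorffWithin_of_hausdorffEDist_le hC₀ h).image hK hg).symm.trans
      hgfA).hausdorffEDist_le
  refine ⟨fun B hB => ?_, fun A hA => ?_⟩
  · obtain ⟨A, hA, h⟩ := hf.2 B hB
    exact ⟨A, hA, hback A B h⟩
  · obtain ⟨B, hB, h⟩ := hf.1 A hA
    exact ⟨B, hB, hback A B h⟩

theorem SendsPattern.comp {f g : E → E} {C₁ C₂ K C : ℝ} (hg : SendsPattern g F' F'' C₂)
    (hf : SendsPattern f F F' C₁) (hC₁ : 0 ≤ C₁) (hC₂ : 0 ≤ C₂) (hK : 0 ≤ K)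
    (hgc : ∀ x y, dist (g x) (g y) ≤ K * dist x y + C) :
    SendsPattern (g ∘ f) F F'' (K * (C₁ + 1) + C + (C₂ + 1)) := by
  have hchain : ∀ A B B'' : Set E, hausdorffEDist (f '' A) B ≤ ENNReal.ofReal C₁ →
      hausdorffEDist (g '' B) B'' ≤ ENNReal.ofReal C₂ →
      hausdorffEDist ((g ∘ f) '' A) B'' ≤ ENNReal.ofReal (K * (C₁ + 1) + C + (C₂ + 1)) := by
    intro A B B'' h₁ h₂
    rw [image_comp]
    exact (((hausdorffWithin_of_hausdorffEDist_le hC₁ h₁).image hK hgc).trans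
      (hausdorffWithin_of_hausdorffEDist_le hC₂ h₂)).hausdorffEDist_le
  refine ⟨fun A hA => ?_, fun B'' hB'' => ?_⟩
  · obtain ⟨B, hB, h₁⟩ := hf.1 A hA
    obtain ⟨B'', hB'', h₂⟩ := hg.1 B hB
    exact ⟨B'', hB'', hchain A B B'' h₁ h₂⟩
  · obtain ⟨B, hB, h₂⟩ := hg.2 B'' hB''
    obtain ⟨A, hA, h₁⟩ := hf.2 B hB
    exact ⟨A, hA, hchain A B B'' h₁ h₂⟩

theorem SendsPattern.exists_parallel {g a : E → E} {C₀ ρ : ℝ} (hg : SendsPattern g F F' C₀)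
    (hC₀ : 0 ≤ C₀) (ha : ∀ x, dist (g x) (a x) ≤ ρ) {v u : E} {V U : Submodule ℝ E}
    (hV : V ∈ F) (himage : a '' affTranslate v V = affTranslate u U) :
    U ∈ F' ∧
      ∃ w, hausdorffEDist (g '' affTranslate v V) (affTranslate w U) ≤ ENNReal.ofReal C₀ := by
  obtain ⟨_, ⟨w, W, hW, rfl⟩, hB⟩ := hg.1 _ ⟨v, V, hV, rfl⟩
  have hUW : U = W := by
    refine HausdorffWithin.eq_of_affTranslate (u := u) (w := w) (r := ρ + (C₀ + 1)) ?_
    rw [← himage]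
    exact (hausdorffWithin_image_image_of_dist_le fun x _ => ha x).symm.trans
      (hausdorffWithin_of_hausdorffEDist_le hC₀ hB)
  subst hUW
  exact ⟨hW, w, hB⟩

theorem SendsPattern.respectsParallelPatterns {g : E → E} {R ρ : ℝ} (hg : SendsPattern g F F R)
    (hR : 0 ≤ R) (hρ : ∀ x, dist (g x) x ≤ ρ) : RespectsParallelPatterns R g F :=
  fun _ hV _ => (hg.exists_parallel hR (a := id) hρ hV (image_id _)).2

theorem SendsPattern.map_mem {g : E → E} {C₀ C₁ : ℝ} (hg : SendsPattern g F F' C₀)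
    (hC₀ : 0 ≤ C₀) {M : E →ₗ[ℝ] E} {b : E} (hM : ∀ x, dist (g x) (M x + b) ≤ C₁)
    {V : Submodule ℝ E} (hV : V ∈ F) : V.map M ∈ F' :=
  (hg.exists_parallel hC₀ hM hV (image_affTranslate_zero M b V)).1

theorem RigidCollection.exists_eq_smul_of_map_eq (hrigid : RigidCollection F)
    {M₁ M₂ : E →ₗ[ℝ] E} (h₁ : Bijective M₁) (h₂ : Bijective M₂)
    (hmap : ∀ V ∈ F, V.map M₁ = V.map M₂) :
    ∃ lam : ℝ, lam ≠ 0 ∧ M₁ = lam • M₂ := by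
  set e₂ := LinearEquiv.ofBijective M₂ h₂
  set L := (LinearEquiv.ofBijective M₁ h₁).trans e₂.symm
  have hL : ∀ V ∈ F, V.map (L : E →ₗ[ℝ] E) = V := fun V hV => by
    rw [LinearEquiv.coe_trans, Submodule.map_comp, Submodule.map_symm_eq_iff]
    exact (hmap V hV).symm
  obtain ⟨K, hK, hLqi⟩ := L.exists_isQI
  have hLresp : RespectsParallelPatterns 0 L F := fun V hV v => ⟨L v, by
    rw [← LinearEquiv.coe_coe, LinearMap.image_affTranslate, hL V hV]
    exact hausdorffEDist_self.trans_le zero_le⟩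
  obtain ⟨R', -, hR'⟩ := hrigid K 0 0 hK le_rfl le_rfl
  obtain ⟨lam, b, hlam, hb⟩ := hR' L hLqi hLresp
  have hLlam : (L : E →ₗ[ℝ] E) = lam • LinearMap.id :=
    LinearMap.eq_of_forall_dist_le _ _ (b := b) (R := R') hb
  refine ⟨lam, hlam, LinearMap.ext fun x => ?_⟩
  have hx : L x = lam • x := by simpa using LinearMap.congr_fun hLlam x
  rw [LinearMap.smul_apply, ← e₂.apply_symm_apply (M₁ x)]
  change e₂ (L x) = _
  rw [hx, map_smul]
  rfl

theorem RigidCollection.exists_forall_dist_add_le (hrigid : RigidCollection F) {K C R : ℝ}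
    (hK : 1 ≤ K) (hC : 0 ≤ C) (hR : 0 ≤ R) :
    ∃ R', ∀ h : E → E, IsQI K C h → SendsPattern h F F R → ∀ ρ, (∀ x, dist (h x) x ≤ ρ) →
      ∃ b, ∀ x, dist (h x) (x + b) ≤ R' := by
  obtain ⟨R', -, hR'⟩ := hrigid K C R hK hC hR
  refine ⟨R', fun h hqi hsends ρ hρ => ?_⟩
  obtain ⟨lam, b, -, hb⟩ := hR' h hqi (hsends.respectsParallelPatterns hR hρ)
  have hlam : (LinearMap.id : E →ₗ[ℝ] E) = lam • LinearMap.id :=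
    LinearMap.eq_of_forall_dist_le _ _ (b := b) (R := ρ + R') fun x =>
      (dist_triangle x (h x) (lam • x + b)).trans
        (add_le_add ((dist_comm _ _).trans_le (hρ x)) (hb x))
  refine ⟨b, fun x => ?_⟩
  have hx : lam • x = x := by simpa using (LinearMap.congr_fun hlam x).symm
  have := hb x
  rwa [hx] at this

theorem RigidCollection.exists_bijective_linearMap_dist_le (hrigid : RigidCollection F) {f : E → E}
    {K C C₀ : ℝ} (hK : 1 ≤ K) (hC : 0 ≤ C) (hf : IsQI K C f) (hC₀ : 0 ≤ C₀)
    (hsend : SendsPattern f F F' C₀) :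
    ∃ (M : E →ₗ[ℝ] E) (C₁ : ℝ), Bijective M ∧ ∀ x, dist (f x) (M x + f 0) ≤ C₁ := by
  have hK₀ : 0 < K := by linarith
  obtain ⟨g, hg, hfg, hgf⟩ := hf.exists_quasiInverse hK hC
  have hgc : ∀ x y, dist (g x) (g y) ≤ K * dist x y + 3 * K * C := fun x y => (hg.1 x y).2
  obtain ⟨R', hR'⟩ := hrigid.exists_forall_dist_add_le (K := K * K)
    (C := K * C + 2 * (3 * K * C))
    (R := K * (C₀ + 1) + 3 * K * C + (K * (C₀ + 1) + 3 * K * C + 2 * K * C + 1))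
    (by nlinarith) (by positivity) (by positivity)
  have htranslation : ∀ t, ∃ b, ∀ x, dist (g (f x + t)) (x + b) ≤ R' := fun t =>
    hR' _ (hg.comp (hf.add_const t) hK hC (by positivity))
      ((hsend.of_quasiInverse hC₀ hK₀.le hgc hgf).comp (hsend.add_const t) hC₀ (by positivity)
        hK₀.le hgc)
      (K * ‖t‖ + 3 * K * C + 2 * K * C) fun x => by
        show dist (g (f x + t)) x ≤ _
        have := hgc (f x + t) (f x)
        rw [dist_self_add_left] at this
        linarith [dist_triangle (g (f x + t)) (g (f x)) x, hgf x]
  choose β hβ using htranslation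
  refine hf.1.exists_bijective_linearMap_of_dist_add_le hK₀ (β := β) (E₀ := K * R' + C + C)
    fun t x => ?_
  have h₁ : dist (f (x + β t)) (f (g (f x + t))) ≤ K * R' + C :=
    (hf.1 _ _).2.trans (by rw [dist_comm (x + β t)]; gcongr; exact hβ t x)
  linarith [dist_triangle (f (x + β t)) (f (g (f x + t))) (f x + t), hfg (f x + t)]

end Pattern

/-- Let `F`, `F'` be finite collections of linear subspaces of `ℝⁿ` with `F` rigid, and let
`f` be a quasi-isometry of `ℝⁿ` sending the affine pattern `P_F` to `P_{F'}`.  Then `f` is at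
bounded distance from an invertible affine map, and, up to homothety, only finitely many
affine maps arise in this way over all quasi-isometries sending `P_F` to `P_{F'}`. -/
theorem quasiIsometry_sending_rigid_pattern_is_affine
    {n : ℕ} (F F' : Set (Submodule ℝ (EuclideanSpace ℝ (Fin n))))
    (hFfin : F.Finite) (hF'fin : F'.Finite) (hrigid : RigidCollection F)
    (f : EuclideanSpace ℝ (Fin n) → EuclideanSpace ℝ (Fin n))
    (K C : ℝ) (hK : 1 ≤ K) (hC : 0 ≤ C) (hf : IsQI K C f)
    (C₀ : ℝ) (hC₀ : 0 ≤ C₀) (hsend : SendsPattern f F F' C₀) :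
    (∃ (M : EuclideanSpace ℝ (Fin n) →ₗ[ℝ] EuclideanSpace ℝ (Fin n))
        (b : EuclideanSpace ℝ (Fin n)) (C₁ : ℝ),
        Function.Bijective M ∧ 0 ≤ C₁ ∧ ∀ x, dist (f x) (M x + b) ≤ C₁) ∧
    ∃ s : Finset (EuclideanSpace ℝ (Fin n) →ₗ[ℝ] EuclideanSpace ℝ (Fin n)),
      ∀ g : EuclideanSpace ℝ (Fin n) → EuclideanSpace ℝ (Fin n),
        (∃ K' C' : ℝ, 1 ≤ K' ∧ 0 ≤ C' ∧ IsQI K' C' g) →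
        (∃ C₀' : ℝ, 0 ≤ C₀' ∧ SendsPattern g F F' C₀') →
        ∀ (M : EuclideanSpace ℝ (Fin n) →ₗ[ℝ] EuclideanSpace ℝ (Fin n))
          (b : EuclideanSpace ℝ (Fin n)) (C₁ : ℝ),
          Function.Bijective M → (∀ x, dist (g x) (M x + b) ≤ C₁) →
          ∃ M₀ ∈ s, ∃ lam : ℝ, lam ≠ 0 ∧ M = lam • M₀ := by
  refine ⟨?_, ?_⟩
  · obtain ⟨M, C₁, hM, hfM⟩ := hrigid.exists_bijective_linearMap_dist_le hK hC hf hC₀ hsend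
    exact ⟨M, f 0, C₁, hM, dist_nonneg.trans (hfM 0), hfM⟩
  · have : Finite F := hFfin.to_subtype
    set S := {M : EuclideanSpace ℝ (Fin n) →ₗ[ℝ] EuclideanSpace ℝ (Fin n) |
      Bijective M ∧ ∀ V ∈ F, V.map M ∈ F'}
    have hfin : ((fun M (V : F) => V.1.map M) '' S).Finite :=
      (Set.Finite.pi' fun _ => hF'fin).subset (by rintro _ ⟨M, hM, rfl⟩ V; exact hM.2 V V.2)
    obtain ⟨s, hsS, hs⟩ := hfin.exists_finset_forall_exists_eq
    refine ⟨s, fun g _ ⟨C₀', hC₀', hg⟩ M b C₁ hM hgM => ?_⟩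
    obtain ⟨M₀, hM₀, hmap⟩ := hs M ⟨hM, fun V hV => hg.map_mem hC₀' hgM hV⟩
    obtain ⟨lam, hlam, hMlam⟩ := hrigid.exists_eq_smul_of_map_eq hM (hsS M₀ hM₀).1
      fun V hV => (congr_fun hmap ⟨V, hV⟩).symm
    exact ⟨M₀, hM₀, lam, hlam, hMlam⟩
end

section
/- Let L be an unbounded geodesic metric space, let T be a tree (a connected acyclic simple graph) whose vertex set carries the graph metric, and suppose there is a quasi-isometry f : L → V(T). Suppose a group H acts on L by isometries and the action is cobounded: there exists d ≥ 0 such that for all p, x ∈ L there is h ∈ H with d(p, h·x) ≤ d. Then L has at least two ends; more precisely, there exist a point p ∈ L and a radius l > 0 such that the complement L ∖ {x ∈ L : d(x,p) ≤ l} has at least two distinct connected components, each of which is unbounded. -/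
/-- A metric space is geodesic if any two points are joined by an isometrically
parametrized path of length equal to their distance. -/
def GeodesicMetricSpace (L : Type*) [MetricSpace L] : Prop :=
  ∀ x y : L, ∃ γ : ℝ → L, γ 0 = x ∧ γ (dist x y) = y ∧
    ∀ s ∈ Set.Icc (0 : ℝ) (dist x y), ∀ t ∈ Set.Icc (0 : ℝ) (dist x y),
      dist (γ s) (γ t) = |s - t|

/-!
Take `x, y` far apart, let `m` be the vertex halfway along the tree geodesic from `f x` to `f y`,
and `p` a point with `f p` near `m`. Since `f` is coarsely continuous, a preconnected set
containing `x` and `y` yields a tree walk from `f x` to `f y` staying close to its image; in a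
tree that walk passes through `m`, so the set comes close to `p`. Hence `x` and `y` lie in
different components of the complement of a ball around `p`. Each of these components is
unbounded: coboundedness puts the midpoint of an arbitrarily long geodesic near any point, and
one half of that geodesic misses the ball.
-/

open Metric Set Topology Bornology

namespace SimpleGraph

variable {V : Type*} {G : SimpleGraph V}

lemma dist_le_length_of_mem_support {u v w : V} (W : G.Walk u v) (hw : w ∈ W.support) :
    G.dist u w ≤ W.length := by
  classical
  exact (dist_le (W.takeUntil w hw)).trans (W.length_takeUntil_le_length hw)

lemma IsAcyclic.support_subset_of_isPath (hG : G.IsAcyclic) {u v : V} {P : G.Walk u v}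
    (hP : P.IsPath) (W : G.Walk u v) : P.support ⊆ W.support := by
  classical
  obtain rfl : P = W.bypass :=
    congrArg Subtype.val ((hG.subsingleton_path u v).elim ⟨P, hP⟩ ⟨W.bypass, W.bypass_isPath⟩)
  exact W.support_bypass_subset_support

lemma IsTree.exists_dist_eq_forall_mem_support (hG : G.IsTree) (u v : V) {k : ℕ}
    (hk : k ≤ G.dist u v) :
    ∃ m, G.dist u m = k ∧ G.dist m v = G.dist u v - k ∧ ∀ W : G.Walk u v, m ∈ W.support := by
  obtain ⟨P, hP, hlen⟩ := hG.connected.exists_path_of_dist u v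
  have h₁ : G.dist u (P.getVert k) ≤ k := (dist_le (P.take k)).trans (by simp [Walk.take_length])
  have h₂ : G.dist (P.getVert k) v ≤ G.dist u v - k :=
    (dist_le (P.drop k)).trans (by simp [Walk.drop_length, hlen])
  have := hG.connected.dist_triangle (u := u) (v := P.getVert k) (w := v)
  exact ⟨P.getVert k, by omega, by omega,
    fun W => hG.isAcyclic.support_subset_of_isPath hP W (P.getVert_mem_support k)⟩

end SimpleGraph

lemma IsPreconnected.exists_walk_forall_mem_support_near {X V : Type*} [TopologicalSpace X]
    {G : SimpleGraph V} {S : Set X} (hS : IsPreconnected S) (hG : G.Connected) {g : X → V}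
    {R : ℝ} (hg : ∀ x ∈ S, ∀ᶠ y in 𝓝[S] x, (G.dist (g x) (g y) : ℝ) ≤ R) {x y : X}
    (hx : x ∈ S) (hy : y ∈ S) :
    ∃ W : G.Walk (g x) (g y), ∀ v ∈ W.support, ∃ z ∈ S, (G.dist (g z) v : ℝ) ≤ R := by
  refine hS.induction₂
    (fun a b => ∃ W : G.Walk (g a) (g b), ∀ v ∈ W.support, ∃ z ∈ S, (G.dist (g z) v : ℝ) ≤ R)
    ?_ ?_ ?_ hx hy
  · intro a ha
    filter_upwards [hg a ha] with b hb
    obtain ⟨W, hW⟩ := hG.exists_walk_length_eq_dist (g a) (g b)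
    refine ⟨W, fun v hv => ⟨a, ha, le_trans ?_ hb⟩⟩
    exact_mod_cast hW ▸ SimpleGraph.dist_le_length_of_mem_support W hv
  · rintro a b c - - - ⟨W₁, h₁⟩ ⟨W₂, h₂⟩
    refine ⟨W₁.append W₂, fun v hv => ?_⟩
    rcases (SimpleGraph.Walk.mem_support_append_iff _ _).1 hv with hv | hv
    exacts [h₁ v hv, h₂ v hv]
  · rintro a b - - ⟨W, hW⟩
    exact ⟨W.reverse, fun v hv => hW v (by simpa using hv)⟩

lemma IsPreconnected.exists_dist_le_of_forall_mem_support {L V : Type*} [MetricSpace L]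
    {T : SimpleGraph V} (hT : T.Connected) {K C : ℝ} (hK : 0 ≤ K) {f : L → V}
    (hf_upper : ∀ x x' : L, (T.dist (f x) (f x') : ℝ) ≤ K * dist x x' + C)
    (hf_lower : ∀ x x' : L, dist x x' ≤ K * (T.dist (f x) (f x') + C))
    {S : Set L} (hS : IsPreconnected S) {x y p : L} {m : V} (hx : x ∈ S) (hy : y ∈ S)
    (hm : ∀ W : T.Walk (f x) (f y), m ∈ W.support) (hp : (T.dist (f p) m : ℝ) ≤ C) :
    ∃ a ∈ S, dist a p ≤ K * (K + 3 * C) := by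
  have hg : ∀ a ∈ S, ∀ᶠ b in 𝓝[S] a, (T.dist (f a) (f b) : ℝ) ≤ K + C := by
    intro a _
    filter_upwards [mem_nhdsWithin_of_mem_nhds (ball_mem_nhds a one_pos)] with b hb
    have := hf_upper a b
    nlinarith [(mem_ball'.1 hb).le]
  obtain ⟨W, hW⟩ := hS.exists_walk_forall_mem_support_near hT hg hx hy
  obtain ⟨a, ha, ham⟩ := hW m (hm W)
  have hap : (T.dist (f a) (f p) : ℝ) ≤ K + 2 * C := by
    have := hT.dist_triangle (u := f a) (v := m) (w := f p)
    rw [SimpleGraph.dist_comm (u := m)] at this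
    have : (T.dist (f a) (f p) : ℝ) ≤ T.dist (f a) m + T.dist (f p) m := by exact_mod_cast this
    linarith
  exact ⟨a, ha, (hf_lower a p).trans (mul_le_mul_of_nonneg_left (by linarith) hK)⟩

lemma lt_dist_of_lt_dist_of_dist_le {L V : Type*} [MetricSpace L] {T : SimpleGraph V}
    (hT : T.Connected) {K C ρ : ℝ} (hK : 0 < K) {f : L → V}
    (hf_upper : ∀ x x' : L, (T.dist (f x) (f x') : ℝ) ≤ K * dist x x' + C) {x p : L} {m : V}
    (hx : K * ρ + 2 * C < T.dist (f x) m) (hp : (T.dist (f p) m : ℝ) ≤ C) : ρ < dist x p := by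
  have htri : (T.dist (f x) m : ℝ) ≤ T.dist (f x) (f p) + T.dist (f p) m := by
    exact_mod_cast hT.dist_triangle
  have := hf_upper x p
  exact lt_of_mul_lt_mul_left (by linarith) hK.le

lemma exists_far_pair_through_cut_vertex {L V : Type*} [MetricSpace L] {T : SimpleGraph V}
    (hT : T.IsTree) (hunbdd : ¬ IsBounded (univ : Set L)) {K C : ℝ} (hK : 0 < K) {f : L → V}
    (hf_upper : ∀ x x' : L, (T.dist (f x) (f x') : ℝ) ≤ K * dist x x' + C)
    (hf_lower : ∀ x x' : L, dist x x' ≤ K * (T.dist (f x) (f x') + C))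
    (hfdense : ∀ v : V, ∃ x : L, (T.dist (f x) v : ℝ) ≤ C) (ρ : ℝ) :
    ∃ x y p : L, ∃ m : V, (∀ W : T.Walk (f x) (f y), m ∈ W.support) ∧
      (T.dist (f p) m : ℝ) ≤ C ∧ ρ < dist x p ∧ ρ < dist y p := by
  obtain ⟨k, hk⟩ := exists_nat_gt (K * ρ + 2 * C)
  obtain ⟨x, y, hxy⟩ : ∃ x y : L, K * (2 * k + C) < dist x y := by
    rw [isBounded_iff] at hunbdd
    push Not at hunbdd
    obtain ⟨x, -, y, -, hxy⟩ := hunbdd _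
    exact ⟨x, y, hxy⟩
  have hk₂ : 2 * k ≤ T.dist (f x) (f y) := by
    have := lt_of_mul_lt_mul_left (hxy.trans_le (hf_lower x y)) hK.le
    exact_mod_cast (lt_of_add_lt_add_right this).le
  obtain ⟨m, hxm, hmy, hm⟩ := hT.exists_dist_eq_forall_mem_support (f x) (f y) (k := k) (by omega)
  have hym : k ≤ T.dist (f y) m := by rw [SimpleGraph.dist_comm, hmy]; omega
  obtain ⟨p, hp⟩ := hfdense m
  refine ⟨x, y, p, m, hm, hp, ?_, ?_⟩
  · exact lt_dist_of_lt_dist_of_dist_le hT.connected hK hf_upper (hxm ▸ hk) hp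
  · exact lt_dist_of_lt_dist_of_dist_le hT.connected hK hf_upper
      (hk.trans_le (by exact_mod_cast hym)) hp

section Geodesic

variable {L : Type*} [MetricSpace L]

lemma isPreconnected_image_Icc_of_dist_eq {σ : ℝ → L} {a b : ℝ}
    (hσ : ∀ s ∈ Icc a b, ∀ t ∈ Icc a b, dist (σ s) (σ t) = |s - t|) :
    IsPreconnected (σ '' Icc a b) := by
  refine isPreconnected_Icc.image σ (LipschitzOnWith.of_dist_le_mul (K := 1) ?_).continuousOn
  intro s hs t ht
  simp [hσ s hs t ht, Real.dist_eq]

lemma GeodesicMetricSpace.mem_connectedComponentIn (hgeo : GeodesicMetricSpace L) {U : Set L}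
    {x y : L} (hU : closedBall x (dist x y) ⊆ U) : y ∈ connectedComponentIn U x := by
  obtain ⟨γ, hγ0, hγ1, hγ⟩ := hgeo x y
  have hseg : γ '' Icc 0 (dist x y) ⊆ closedBall x (dist x y) := by
    rintro _ ⟨s, hs, rfl⟩
    have hγs := hγ 0 ⟨le_rfl, dist_nonneg⟩ s hs
    rw [hγ0, zero_sub, abs_neg, abs_of_nonneg hs.1] at hγs
    exact mem_closedBall'.2 (hγs.le.trans hs.2)
  refine (isPreconnected_image_Icc_of_dist_eq hγ).subset_connectedComponentIn
    ⟨0, ⟨le_rfl, dist_nonneg⟩, hγ0⟩ (hseg.trans hU) ⟨dist x y, ⟨dist_nonneg, le_rfl⟩, hγ1⟩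

lemma exists_geodesic_segment_centered_near {H : Type*} [Group H] [MulAction H L]
    (hgeo : GeodesicMetricSpace L) (hunbdd : ¬ IsBounded (univ : Set L))
    (hiso : ∀ (h : H) (x y : L), dist (h • x) (h • y) = dist x y)
    {d : ℝ} (hcb : ∀ p x : L, ∃ h : H, dist p (h • x) ≤ d) (q : L) (N : ℝ) :
    ∃ σ : ℝ → L, (∀ s ∈ Icc (-N) N, ∀ t ∈ Icc (-N) N, dist (σ s) (σ t) = |s - t|) ∧
      dist q (σ 0) ≤ d := by
  rw [isBounded_iff] at hunbdd
  push Not at hunbdd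
  obtain ⟨b, -, z, -, hbz⟩ := hunbdd (2 * N)
  obtain ⟨γ, -, -, hγ⟩ := hgeo b z
  obtain ⟨h, hh⟩ := hcb q (γ (dist b z / 2))
  have hshift : ∀ s ∈ Icc (-N) N, s + dist b z / 2 ∈ Icc 0 (dist b z) := fun s hs =>
    ⟨by linarith [hs.1], by linarith [hs.2]⟩
  refine ⟨fun t => h • γ (t + dist b z / 2), fun s hs t ht => ?_, by simpa using hh⟩
  rw [hiso, hγ _ (hshift s hs) _ (hshift t ht), add_sub_add_right_eq_sub]

lemma exists_half_segment_disjoint_closedBall {σ : ℝ → L} {N l : ℝ}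
    (hσ : ∀ s ∈ Icc (-N) N, ∀ t ∈ Icc (-N) N, dist (σ s) (σ t) = |s - t|) {p : L}
    (hp : 2 * l < dist (σ 0) p) :
    ∃ τ : ℝ → L, τ 0 = σ 0 ∧ (∀ s ∈ Icc 0 N, ∀ t ∈ Icc 0 N, dist (τ s) (τ t) = |s - t|) ∧
      τ '' Icc 0 N ⊆ (closedBall p l)ᶜ := by
  have hpos : ∀ s ∈ Icc 0 N, s ∈ Icc (-N) N := fun s hs => ⟨by linarith [hs.1, hs.2], hs.2⟩
  have hneg : ∀ s ∈ Icc 0 N, -s ∈ Icc (-N) N := fun s hs =>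
    ⟨by linarith [hs.2], by linarith [hs.1, hs.2]⟩
  by_cases hright : ∀ s ∈ Icc 0 N, σ s ∉ closedBall p l
  · refine ⟨σ, rfl, fun s hs t ht => hσ s (hpos s hs) t (hpos t ht), ?_⟩
    rintro _ ⟨s, hs, rfl⟩
    exact hright s hs
  push Not at hright
  obtain ⟨s₂, hs₂, hσs₂⟩ := hright
  refine ⟨fun t => σ (-t), by simp, fun s hs t ht => ?_, ?_⟩
  · rw [hσ _ (hneg s hs) _ (hneg t ht), ← abs_neg]
    ring_nf
  -- both halves meeting the ball would put the centre within `2 * l` of `p`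
  rintro _ ⟨s, hs, rfl⟩ hσs
  have h₀ : (0 : ℝ) ∈ Icc (-N) N := hpos 0 ⟨le_rfl, hs.1.trans hs.2⟩
  have hss₂ := hσ (-s) (hneg s hs) s₂ (hpos s₂ hs₂)
  have hs₀ := hσ 0 h₀ (-s) (hneg s hs)
  have hs₂₀ := hσ 0 h₀ s₂ (hpos s₂ hs₂)
  rw [abs_of_nonpos (by linarith [hs.1, hs₂.1])] at hss₂
  rw [sub_neg_eq_add, zero_add, abs_of_nonneg hs.1] at hs₀
  rw [zero_sub, abs_neg, abs_of_nonneg hs₂.1] at hs₂₀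
  rw [mem_closedBall] at hσs hσs₂
  linarith [dist_triangle_right (σ (-s)) (σ s₂) p, dist_triangle (σ 0) (σ (-s)) p,
    dist_triangle (σ 0) (σ s₂) p]

lemma not_isBounded_connectedComponentIn_compl_closedBall {H : Type*} [Group H] [MulAction H L]
    (hgeo : GeodesicMetricSpace L) (hunbdd : ¬ IsBounded (univ : Set L))
    (hiso : ∀ (h : H) (x y : L), dist (h • x) (h • y) = dist x y)
    {d : ℝ} (hcb : ∀ p x : L, ∃ h : H, dist p (h • x) ≤ d) {p a : L} {l : ℝ}
    (ha : 2 * l + 2 * d < dist a p) :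
    ¬ IsBounded (connectedComponentIn (closedBall p l)ᶜ a) := by
  rw [isBounded_iff_subset_closedBall a]
  rintro ⟨r, hr⟩
  set N := r + d + 1
  obtain ⟨σ, hσ, haσ⟩ := exists_geodesic_segment_centered_near hgeo hunbdd hiso hcb a N
  have hd : 0 ≤ d := dist_nonneg.trans haσ
  have hσp : 2 * l < dist (σ 0) p := by linarith [dist_triangle a (σ 0) p]
  obtain ⟨τ, hτ0, hτ, hτU⟩ := exists_half_segment_disjoint_closedBall hσ hσp
  have hσa : σ 0 ∈ connectedComponentIn (closedBall p l)ᶜ a := by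
    refine hgeo.mem_connectedComponentIn fun z hz => ?_
    rw [mem_closedBall, dist_comm] at hz
    rw [mem_compl_iff, mem_closedBall, not_le]
    linarith [dist_triangle a z p, dist_nonneg (x := z) (y := p)]
  have hr₀ : 0 ≤ r := dist_nonneg.trans (mem_closedBall.1 (hr hσa))
  have h₀ : (0 : ℝ) ∈ Icc 0 N := ⟨le_rfl, by linarith⟩
  have hN : N ∈ Icc 0 N := ⟨by linarith, le_rfl⟩
  have hτa : τ N ∈ connectedComponentIn (closedBall p l)ᶜ a := by
    rw [connectedComponentIn_eq hσa, ← hτ0]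
    exact (isPreconnected_image_Icc_of_dist_eq hτ).subset_connectedComponentIn
      ⟨0, h₀, rfl⟩ hτU ⟨N, hN, rfl⟩
  have hτN := hτ 0 h₀ N hN
  rw [zero_sub, abs_neg, abs_of_nonneg hN.1, hτ0] at hτN
  linarith [dist_triangle (σ 0) a (τ N), mem_closedBall.1 (hr hτa), dist_comm (σ 0) a,
    dist_comm (τ N) a]

end Geodesic

theorem two_ends_of_cobounded_space_qi_to_tree_general
    {L V : Type*} [MetricSpace L] (T : SimpleGraph V) (htree : T.IsTree)
    (hgeo : GeodesicMetricSpace L)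
    (hunbdd : ¬ Bornology.IsBounded (Set.univ : Set L))
    (K C : ℝ) (hK : 1 ≤ K) (hC : 0 ≤ C) (f : L → V)
    (hf : ∀ x x' : L, (1/K) * dist x x' - C ≤ (T.dist (f x) (f x') : ℝ) ∧
      (T.dist (f x) (f x') : ℝ) ≤ K * dist x x' + C)
    (hfdense : ∀ v : V, ∃ x : L, (T.dist (f x) v : ℝ) ≤ C)
    (H : Type*) [Group H] [MulAction H L]
    (hiso : ∀ (h : H) (x y : L), dist (h • x) (h • y) = dist x y)
    (d : ℝ) (hcb : ∀ p x : L, ∃ h : H, dist p (h • x) ≤ d) :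
    ∃ (p : L) (l : ℝ), 0 < l ∧
      ∃ x ∈ (Metric.closedBall p l)ᶜ, ∃ y ∈ (Metric.closedBall p l)ᶜ,
        connectedComponentIn (Metric.closedBall p l)ᶜ x ≠
          connectedComponentIn (Metric.closedBall p l)ᶜ y ∧
        ¬ Bornology.IsBounded (connectedComponentIn (Metric.closedBall p l)ᶜ x) ∧
        ¬ Bornology.IsBounded (connectedComponentIn (Metric.closedBall p l)ᶜ y) := by
  have hK₀ : 0 < K := by linarith
  have hf_upper := fun x x' => (hf x x').2
  have hf_lower : ∀ x x' : L, dist x x' ≤ K * (T.dist (f x) (f x') + C) := fun x x' => by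
    have := (hf x x').1
    rw [one_div_mul_eq_div, sub_le_iff_le_add, div_le_iff₀ hK₀] at this
    linarith
  set l := K * (K + 3 * C) + 1
  have hl : 0 < l := by positivity
  obtain ⟨x, y, p, m, hm, hp, hxp, hyp⟩ := exists_far_pair_through_cut_vertex htree hunbdd hK₀
    hf_upper hf_lower hfdense (2 * l + 2 * d)
  have hd : 0 ≤ d := dist_nonneg.trans (hcb x x).choose_spec
  have hxU : x ∈ (closedBall p l)ᶜ := by
    rw [mem_compl_iff, mem_closedBall, not_le]; linarith
  have hyU : y ∈ (closedBall p l)ᶜ := by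
    rw [mem_compl_iff, mem_closedBall, not_le]; linarith
  refine ⟨p, l, hl, x, hxU, y, hyU, fun heq => ?_,
    not_isBounded_connectedComponentIn_compl_closedBall hgeo hunbdd hiso hcb hxp,
    not_isBounded_connectedComponentIn_compl_closedBall hgeo hunbdd hiso hcb hyp⟩
  obtain ⟨a, ha, hap⟩ := isPreconnected_connectedComponentIn.exists_dist_le_of_forall_mem_support
    htree.connected hK₀.le hf_upper hf_lower (mem_connectedComponentIn hxU)
    (heq ▸ mem_connectedComponentIn hyU) hm hp
  exact connectedComponentIn_subset _ _ ha (mem_closedBall.2 (by linarith))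

/-- Let `L` be an unbounded geodesic metric space, `T` a tree with the graph metric on its
vertices, and `f : L → V(T)` a `(K,C)`-quasi-isometry.  If a group `H` acts on `L` by
isometries with cobounded action, then `L` has at least two ends: there are `p ∈ L` and
`l > 0` such that the complement of the closed ball `B(p,l)` has at least two distinct
connected components, each of which is unbounded. -/
theorem two_ends_of_cobounded_space_qi_to_tree
    {L V : Type*} [MetricSpace L] (T : SimpleGraph V) (htree : T.IsTree)
    (hgeo : GeodesicMetricSpace L)
    (hunbdd : ¬ Bornology.IsBounded (Set.univ : Set L))
    (K C : ℝ) (hK : 1 ≤ K) (hC : 0 ≤ C) (f : L → V)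
    (hf : ∀ x x' : L, (1/K) * dist x x' - C ≤ (T.dist (f x) (f x') : ℝ) ∧
      (T.dist (f x) (f x') : ℝ) ≤ K * dist x x' + C)
    (hfdense : ∀ v : V, ∃ x : L, (T.dist (f x) v : ℝ) ≤ C)
    (H : Type*) [Group H] [MulAction H L]
    (hiso : ∀ (h : H) (x y : L), dist (h • x) (h • y) = dist x y)
    (d : ℝ) (hd : 0 ≤ d) (hcb : ∀ p x : L, ∃ h : H, dist p (h • x) ≤ d) :
    ∃ (p : L) (l : ℝ), 0 < l ∧
      ∃ x ∈ (Metric.closedBall p l)ᶜ, ∃ y ∈ (Metric.closedBall p l)ᶜ,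
        connectedComponentIn (Metric.closedBall p l)ᶜ x ≠
          connectedComponentIn (Metric.closedBall p l)ᶜ y ∧
        ¬ Bornology.IsBounded (connectedComponentIn (Metric.closedBall p l)ᶜ x) ∧
        ¬ Bornology.IsBounded (connectedComponentIn (Metric.closedBall p l)ᶜ y) :=
  two_ends_of_cobounded_space_qi_to_tree_general T htree hgeo hunbdd K C hK hC f hf hfdense H hiso d
    hcb
end
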